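/- arXiv:2110.14194 — 13 statements merged into one kernel-verified Lean document; each statement's English description precedes it below -/
import Mathlib

section
/- A left ideal K of a semigroup S is maximal among proper left ideals if and only if S \ K is a single L-class (where x L y iff S¹x = S¹y). -/
open Set

variable {S : Type*}

/-- A left ideal of a semigroup: a nonempty subset `I` with `S * I ⊆ I`. -/
def IsLeftIdeal [Semigroup S] (I : Set S) : Prop :=
  I.Nonempty ∧ ∀ s : S, ∀ x ∈ I, s * x ∈ I

/-- A nontrivial left ideal is a left ideal different from `S`. -/
def IsNontrivialLeftIdeal [Semigroup S] (I : Set S) : Prop :=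
  IsLeftIdeal I ∧ I ≠ Set.univ

/-- A minimal left ideal: a nontrivial left ideal properly containing no left ideal. -/
def IsMinimalLeftIdeal [Semigroup S] (I : Set S) : Prop :=
  IsNontrivialLeftIdeal I ∧ ∀ J : Set S, IsLeftIdeal J → J ⊆ I → J = I

/-- A maximal left ideal: a nontrivial left ideal properly contained in no
nontrivial left ideal. -/
def IsMaximalLeftIdeal [Semigroup S] (I : Set S) : Prop :=
  IsNontrivialLeftIdeal I ∧ ∀ J : Set S, IsNontrivialLeftIdeal J → I ⊆ J → J = I

/-- Vertices of the inclusion ideal graph: the nontrivial left ideals of `S`. -/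
def IdealVert (S : Type*) [Semigroup S] := {I : Set S // IsNontrivialLeftIdeal I}

/-- The inclusion ideal graph of a semigroup: distinct nontrivial left ideals are
adjacent iff one properly contains the other. -/
def inclusionIdealGraph (S : Type*) [Semigroup S] : SimpleGraph (IdealVert S) :=
  SimpleGraph.fromRel (fun I J => I.1 ⊂ J.1)

/-- `S¹x = Sx ∪ {x}`. -/
def sOne [Semigroup S] (x : S) : Set S := {x} ∪ {y : S | ∃ s : S, y = s * x}

/-- Green's `L`-relation: `x L y` iff `S¹x = S¹y`. -/
def GreenL [Semigroup S] (x y : S) : Prop := sOne x = sOne y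

lemma mem_sOne_self [Semigroup S] (x : S) : x ∈ sOne x := Or.inl rfl

lemma sOne_leftIdeal [Semigroup S] (x : S) (s : S) {y : S} (hy : y ∈ sOne x) :
    s * y ∈ sOne x := by
  rcases hy with h | ⟨t, rfl⟩
  · exact Or.inr ⟨s, by rw [Set.mem_singleton_iff] at h; rw [h]⟩
  · exact Or.inr ⟨s * t, (mul_assoc s t x).symm⟩

lemma sOne_subset [Semigroup S] {x y : S} (hy : y ∈ sOne x) : sOne y ⊆ sOne x := by
  intro z hz
  rcases hz with h | ⟨t, rfl⟩
  · rw [Set.mem_singleton_iff] at h; exact h ▸ hy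
  · exact sOne_leftIdeal x t hy

/-- A left ideal `K` is maximal among proper left ideals iff `S \ K` is a single
`L`-class. -/
theorem stmt0 [Semigroup S] (K : Set S) (hK : IsNontrivialLeftIdeal K) :
    IsMaximalLeftIdeal K ↔ ∃ x : S, Set.univ \ K = {y : S | GreenL x y} := by
  constructor
  · rintro ⟨_, hmax⟩
    obtain ⟨x, hx⟩ : ∃ x, x ∉ K := by
      by_contra h
      push_neg at h
      exact hK.2 (Set.eq_univ_of_forall h)
    -- K ∪ sOne z = univ for any z ∉ K
    have key : ∀ z : S, z ∉ K → K ∪ sOne z = Set.univ := by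
      intro z hz
      by_contra hne
      have hJ : IsNontrivialLeftIdeal (K ∪ sOne z) := by
        refine ⟨⟨⟨z, Or.inr (mem_sOne_self z)⟩, ?_⟩, hne⟩
        rintro s w (hw | hw)
        · exact Or.inl (hK.1.2 s w hw)
        · exact Or.inr (sOne_leftIdeal z s hw)
      have := hmax _ hJ Set.subset_union_left
      exact hz (this ▸ Or.inr (mem_sOne_self z) : z ∈ K)
    refine ⟨x, Set.ext fun y => ?_⟩
    simp only [Set.mem_diff, Set.mem_univ, true_and, Set.mem_setOf_eq]
    constructor
    · intro hy
      have hyx : y ∈ sOne x := by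
        have := key x hx
        rcases (this ▸ Set.mem_univ y : y ∈ K ∪ sOne x) with h | h
        · exact absurd h hy
        · exact h
      have hxy : x ∈ sOne y := by
        have := key y hy
        rcases (this ▸ Set.mem_univ x : x ∈ K ∪ sOne y) with h | h
        · exact absurd h hx
        · exact h
      exact Set.Subset.antisymm (sOne_subset hxy) (sOne_subset hyx)
    · intro hL hy
      have hx' : x ∈ sOne y := hL ▸ mem_sOne_self x
      rcases hx' with h | ⟨s, rfl⟩
      · rw [Set.mem_singleton_iff] at h; exact hx (h ▸ hy)
      · exact hx (hK.1.2 s y hy)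
  · rintro ⟨x, hx⟩
    have hxK : x ∉ K := by
      have : x ∈ Set.univ \ K := hx ▸ (rfl : GreenL x x)
      exact this.2
    refine ⟨hK, fun J hJ hKJ => ?_⟩
    by_contra hne
    obtain ⟨y, hyJ, hyK⟩ : ∃ y, y ∈ J ∧ y ∉ K := by
      rcases Set.not_subset.mp (fun h => hne (Set.Subset.antisymm h hKJ)) with ⟨y, hy1, hy2⟩
      exact ⟨y, hy1, hy2⟩
    have hLxy : GreenL x y := by
      have : y ∈ Set.univ \ K := ⟨Set.mem_univ y, hyK⟩
      exact (hx ▸ this : y ∈ {y | GreenL x y})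
    have hxJ : x ∈ J := by
      have hx' : x ∈ sOne y := hLxy ▸ mem_sOne_self x
      rcases hx' with h | ⟨s, rfl⟩
      · rw [Set.mem_singleton_iff] at h; exact h ▸ hyJ
      · exact hJ.1.2 s y hyJ
    apply hJ.2
    apply Set.eq_univ_of_forall
    intro z
    by_cases hz : z ∈ K
    · exact hKJ hz
    · have hLxz : GreenL x z := (hx ▸ (⟨Set.mem_univ z, hz⟩ : z ∈ Set.univ \ K) : z ∈ {y | GreenL x y})
      have : z ∈ sOne x := hLxz ▸ mem_sOne_self z
      rcases this with h | ⟨s, rfl⟩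
      · rw [Set.mem_singleton_iff] at h; exact h ▸ hxJ
      · exact hJ.1.2 s x hxJ
end

section
/- In a completely simple semigroup with finitely many minimal left ideals, every nontrivial left ideal is a union of minimal left ideals. -/
open Set

variable {S : Type*}

/-- A (two-sided) ideal of a semigroup. -/
def IsIdeal [Semigroup S] (I : Set S) : Prop :=
  I.Nonempty ∧ (∀ s : S, ∀ x ∈ I, s * x ∈ I) ∧ (∀ s : S, ∀ x ∈ I, x * s ∈ I)

/-- A completely simple semigroup: simple (no proper two-sided ideal) and containing
a primitive idempotent. -/
def IsCompletelySimple (S : Type*) [Semigroup S] : Prop :=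
  (∀ I : Set S, IsIdeal I → I = Set.univ) ∧
    ∃ e : S, e * e = e ∧ ∀ f : S, f * f = f → f * e = f → e * f = f → f = e

/-- In a completely simple semigroup with finitely many minimal left ideals, every
nontrivial left ideal is a union of minimal left ideals. -/
theorem stmt2 [Semigroup S] (hS : IsCompletelySimple S)
    (hfin : {I : Set S | IsMinimalLeftIdeal I}.Finite)
    (I : Set S) (hI : IsNontrivialLeftIdeal I) :
    ∃ 𝒯 : Set (Set S), (∀ J ∈ 𝒯, IsMinimalLeftIdeal J) ∧ I = ⋃₀ 𝒯 := by
  obtain ⟨hsimple, e, hee, hprim⟩ := hS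
  -- every element generates the whole semigroup as a two-sided ideal
  have hsur : ∀ a b : S, ∃ x y : S, x * a * y = b := by
    intro a b
    have hT : IsIdeal {z : S | ∃ x y : S, x * a * y = z} := by
      refine ⟨⟨a * a * a, a, a, rfl⟩, ?_, ?_⟩
      · rintro s z ⟨x, y, rfl⟩
        exact ⟨s * x, y, by simp only [mul_assoc]⟩
      · rintro s z ⟨x, y, rfl⟩
        exact ⟨x, y * s, by simp only [mul_assoc]⟩
    have h := hsimple _ hT
    have hb : b ∈ {z : S | ∃ x y : S, x * a * y = z} := h ▸ mem_univ b
    exact hb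
  have hee' : ∀ z : S, e * (e * z) = e * z := fun z => by rw [← mul_assoc, hee]
  -- key lemma: if a * e = a then e ∈ S a
  have lemA : ∀ a : S, a * e = a → ∃ t : S, t * a = e := by
    intro a hae
    obtain ⟨x, y, hxy⟩ := hsur a e
    have hae' : ∀ z : S, a * (e * z) = a * z := fun z => by rw [← mul_assoc, hae]
    have hxy' : ∀ z : S, x * (a * (y * z)) = e * z := fun z => by
      rw [← mul_assoc, ← mul_assoc, hxy]
    have hf : ((e * y * e) * (e * x * a)) * ((e * y * e) * (e * x * a))
        = (e * y * e) * (e * x * a) := by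
      simp only [mul_assoc, hee, hee', hae, hae', hxy']
    have hfe : ((e * y * e) * (e * x * a)) * e = (e * y * e) * (e * x * a) := by
      simp only [mul_assoc, hee, hee', hae, hae', hxy']
    have hef : e * ((e * y * e) * (e * x * a)) = (e * y * e) * (e * x * a) := by
      simp only [mul_assoc, hee, hee', hae, hae', hxy']
    have hfeq := hprim _ hf hfe hef
    refine ⟨(e * y * e) * (e * x), ?_⟩
    calc ((e * y * e) * (e * x)) * a = (e * y * e) * (e * x * a) := by
          rw [mul_assoc, mul_assoc]
      _ = e := hfeq
  -- the set { x | x * e = x } (which is S e) is contained in every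
  -- nonempty left ideal contained in it
  have hSemin : ∀ J' : Set S, IsLeftIdeal J' → (∀ x ∈ J', x * e = x) →
      ∀ y : S, y * e = y → y ∈ J' := by
    rintro J' ⟨⟨x0, hx0⟩, hJ'⟩ hsub y hy
    obtain ⟨t, ht⟩ := lemA x0 (hsub x0 hx0)
    have heJ : e ∈ J' := ht ▸ hJ' t x0 hx0
    have := hJ' y e heJ
    rwa [hy] at this
  -- for each a ∈ I, the set S (e a) is a minimal left ideal containing a
  have key : ∀ a ∈ I, ∃ M : Set S, IsMinimalLeftIdeal M ∧ M ⊆ I ∧ a ∈ M := by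
    intro a haI
    refine ⟨{z : S | ∃ s : S, s * (e * a) = z}, ?_, ?_, ?_⟩
    · -- minimal left ideal
      have hMleft : IsLeftIdeal {z : S | ∃ s : S, s * (e * a) = z} := by
        refine ⟨⟨e * (e * a), e, rfl⟩, ?_⟩
        rintro s z ⟨t, rfl⟩
        exact ⟨s * t, by rw [mul_assoc]⟩
      have hMI : {z : S | ∃ s : S, s * (e * a) = z} ⊆ I := by
        rintro z ⟨s, rfl⟩
        exact hI.1.2 s _ (hI.1.2 e a haI)
      refine ⟨⟨hMleft, ?_⟩, ?_⟩
      · intro h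
        exact hI.2 (eq_univ_of_univ_subset (h ▸ hMI))
      · rintro J ⟨⟨j, hjJ⟩, hJcl⟩ hJM
        refine Set.Subset.antisymm hJM ?_
        rintro z ⟨s, rfl⟩
        -- use minimality of S e via the auxiliary set L'
        have hL' : IsLeftIdeal {x : S | x * e = x ∧ x * a ∈ J} := by
          constructor
          · obtain ⟨s', hs'⟩ := hJM hjJ
            refine ⟨s' * e, by rw [mul_assoc, hee], ?_⟩
            rw [mul_assoc]
            rwa [hs']
          · rintro t x ⟨hxe, hxa⟩
            exact ⟨by rw [mul_assoc, hxe], by rw [mul_assoc]; exact hJcl t _ hxa⟩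
        have hse : s * e ∈ {x : S | x * e = x ∧ x * a ∈ J} :=
          hSemin _ hL' (fun x hx => hx.1) (s * e) (by rw [mul_assoc, hee])
        have := hse.2
        rwa [mul_assoc] at this
    · rintro z ⟨s, rfl⟩
      exact hI.1.2 s _ (hI.1.2 e a haI)
    · -- a ∈ S (e a)
      obtain ⟨u, v, huv⟩ := hsur e a
      have hyz : (u * e) * (e * v) = a := by
        rw [← mul_assoc, mul_assoc u e e, hee, huv]
      have heye : (e * (u * e)) * e = e * (u * e) := by
        rw [mul_assoc, mul_assoc, hee]
      obtain ⟨t, ht⟩ := lemA (e * (u * e)) heye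
      refine ⟨(u * e) * t, ?_⟩
      have hea : e * a = (e * (u * e)) * (e * v) := by
        rw [← hyz, ← mul_assoc]
      rw [mul_assoc, hea, ← mul_assoc t, ht, hee']
      exact hyz
  refine ⟨{J : Set S | IsMinimalLeftIdeal J ∧ J ⊆ I}, fun J hJ => hJ.1, ?_⟩
  apply Set.Subset.antisymm
  · intro a haI
    obtain ⟨M, hMmin, hMI, haM⟩ := key a haI
    exact ⟨M, ⟨hMmin, hMI⟩, haM⟩
  · rintro z ⟨J, ⟨_, hJI⟩, hzJ⟩
    exact hJI hzJ
end

section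
/- The inclusion ideal graph In(S) of a semigroup S is disconnected if and only if S contains at least two minimal left ideals and every nontrivial left ideal of S is both minimal and maximal. -/
open Set

variable {S : Type*}

section Aux
variable [Semigroup S]

lemma union_ideal {I J : Set S} (hI : IsLeftIdeal I) (hJ : IsLeftIdeal J) :
    IsLeftIdeal (I ∪ J) :=
  ⟨hI.1.mono subset_union_left,
    fun s x hx => hx.elim (fun h => Or.inl (hI.2 s x h)) (fun h => Or.inr (hJ.2 s x h))⟩

lemma inter_ideal {I J : Set S} (hI : IsLeftIdeal I) (hJ : IsLeftIdeal J)
    (hne : (I ∩ J).Nonempty) : IsLeftIdeal (I ∩ J) :=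
  ⟨hne, fun s x hx => ⟨hI.2 s x hx.1, hJ.2 s x hx.2⟩⟩

lemma reach_of_subset (u w : IdealVert S) (h : u.1 ⊆ w.1) :
    (inclusionIdealGraph S).Reachable u w := by
  rcases eq_or_ne u w with rfl | hne
  · exact SimpleGraph.Reachable.refl u
  · refine ((SimpleGraph.fromRel_adj _ u w).mpr ⟨hne, Or.inl ⟨h, fun h' => ?_⟩⟩).reachable
    exact hne (Subtype.ext (subset_antisymm h h'))

lemma key_lemma (u v : IdealVert S)
    (h : ¬ (inclusionIdealGraph S).Reachable u v) :
    u.1 ∩ v.1 = ∅ ∧ u.1 ∪ v.1 = Set.univ := by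
  constructor
  · by_contra hi
    have hne : (u.1 ∩ v.1).Nonempty := Set.nonempty_iff_ne_empty.mpr hi
    have hnt : IsNontrivialLeftIdeal (u.1 ∩ v.1) := by
      refine ⟨inter_ideal u.2.1 v.2.1 hne, fun heq => u.2.2 ?_⟩
      have h1 : u.1 ∩ v.1 ⊆ u.1 := Set.inter_subset_left
      rw [heq] at h1
      exact Set.univ_subset_iff.mp h1
    exact h (((reach_of_subset ⟨u.1 ∩ v.1, hnt⟩ u Set.inter_subset_left).symm).trans
      (reach_of_subset ⟨u.1 ∩ v.1, hnt⟩ v Set.inter_subset_right))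
  · by_contra hu
    have hnt : IsNontrivialLeftIdeal (u.1 ∪ v.1) := ⟨union_ideal u.2.1 v.2.1, hu⟩
    exact h ((reach_of_subset u ⟨u.1 ∪ v.1, hnt⟩ Set.subset_union_left).trans
      (reach_of_subset v ⟨u.1 ∪ v.1, hnt⟩ Set.subset_union_right).symm)

omit [Semigroup S] in
lemma compl_of {A B : Set S} (h1 : A ∩ B = ∅) (h2 : A ∪ B = Set.univ) : A = Bᶜ := by
  ext x
  constructor
  · intro hx hxB
    exact Set.eq_empty_iff_forall_notMem.mp h1 x ⟨hx, hxB⟩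
  · intro hx
    rcases (h2.symm ▸ Set.mem_univ x : x ∈ A ∪ B) with h | h
    · exact h
    · exact absurd h hx

lemma no_adj (hall : ∀ I : Set S, IsNontrivialLeftIdeal I →
      IsMinimalLeftIdeal I ∧ IsMaximalLeftIdeal I)
    (a b : IdealVert S) : ¬ (inclusionIdealGraph S).Adj a b := by
  intro hadj
  rcases (SimpleGraph.fromRel_adj _ a b).mp hadj with ⟨hne, hlt | hlt⟩
  · exact hlt.ne ((hall b.1 b.2).1.2 a.1 a.2.1 hlt.subset)
  · exact hlt.ne ((hall a.1 a.2).1.2 b.1 b.2.1 hlt.subset)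

end Aux

/-- `In(S)` is disconnected iff `S` contains at least two minimal left ideals and
every nontrivial left ideal of `S` is both minimal and maximal. -/
theorem stmt3 [Semigroup S] :
    ¬ (inclusionIdealGraph S).Preconnected ↔
      ((∃ I J : Set S, IsMinimalLeftIdeal I ∧ IsMinimalLeftIdeal J ∧ I ≠ J) ∧
        ∀ I : Set S, IsNontrivialLeftIdeal I →
          IsMinimalLeftIdeal I ∧ IsMaximalLeftIdeal I) := by
  constructor
  · intro hdis
    rw [SimpleGraph.Preconnected] at hdis
    push_neg at hdis
    obtain ⟨u, v, hnr⟩ := hdis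
    obtain ⟨hint, huni⟩ := key_lemma u v hnr
    have hvu : v.1 = u.1ᶜ :=
      compl_of (by rwa [Set.inter_comm]) (by rwa [Set.union_comm])
    have huv : u.1 = v.1ᶜ := compl_of hint huni
    -- every nontrivial ideal equals u.1 or v.1
    have hK : ∀ K : Set S, IsNontrivialLeftIdeal K → K = u.1 ∨ K = v.1 := by
      intro K hKnt
      by_cases hr : (inclusionIdealGraph S).Reachable ⟨K, hKnt⟩ v
      · have hnr' : ¬ (inclusionIdealGraph S).Reachable (⟨K, hKnt⟩ : IdealVert S) u :=
          fun h => hnr (h.symm.trans hr)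
        obtain ⟨hi, hu⟩ := key_lemma ⟨K, hKnt⟩ u hnr'
        right
        rw [hvu]
        exact compl_of hi hu
      · obtain ⟨hi, hu⟩ := key_lemma ⟨K, hKnt⟩ v hr
        left
        rw [huv]
        exact compl_of hi hu
    have hune : u.1 ≠ v.1 := by
      intro h
      obtain ⟨x, hx⟩ := u.2.1.1
      exact Set.eq_empty_iff_forall_notMem.mp hint x ⟨hx, h ▸ hx⟩
    -- u.1 and v.1 are disjoint and nonempty
    have hdisj : ∀ x : S, x ∈ u.1 → x ∈ v.1 → False := fun x hx hx' =>
      Set.eq_empty_iff_forall_notMem.mp hint x ⟨hx, hx'⟩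
    have hnvu : ¬ v.1 ⊆ u.1 := fun h => by
      obtain ⟨x, hx⟩ := v.2.1.1
      exact hdisj x (h hx) hx
    have hnuv : ¬ u.1 ⊆ v.1 := fun h => by
      obtain ⟨x, hx⟩ := u.2.1.1
      exact hdisj x hx (h hx)
    have hboth : ∀ w : IdealVert S, IsMinimalLeftIdeal w.1 ∧ IsMaximalLeftIdeal w.1 := by
      intro w
      constructor
      · refine ⟨w.2, fun J hJ hJw => ?_⟩
        have hJnt : IsNontrivialLeftIdeal J :=
          ⟨hJ, fun h => w.2.2 (Set.univ_subset_iff.mp (h ▸ hJw))⟩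
        rcases hK J hJnt with h1 | h1 <;> rcases hK w.1 w.2 with h2 | h2 <;>
            rw [h1, h2] <;> rw [h1, h2] at hJw
        · exact absurd hJw hnuv
        · exact absurd hJw hnvu
      · refine ⟨w.2, fun J hJ hwJ => ?_⟩
        rcases hK J hJ with h1 | h1 <;> rcases hK w.1 w.2 with h2 | h2 <;>
            rw [h1, h2] <;> rw [h1, h2] at hwJ
        · exact absurd hwJ hnvu
        · exact absurd hwJ hnuv
    constructor
    · exact ⟨u.1, v.1, (hboth u).1, (hboth v).1, hune⟩
    · intro I hI
      exact hboth ⟨I, hI⟩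
  · rintro ⟨⟨I, J, hI, hJ, hIJ⟩, hall⟩ hpre
    have hbot : inclusionIdealGraph S = ⊥ := by
      ext a b
      simp only [SimpleGraph.bot_adj, iff_false]
      exact no_adj hall a b
    rw [hbot] at hpre
    have := SimpleGraph.reachable_bot.mp (hpre ⟨I, hI.1⟩ ⟨J, hJ.1⟩)
    exact hIJ (congrArg Subtype.val this)
end

section
/- If the inclusion ideal graph In(S) of a semigroup S is disconnected, then it has no edges (it is a null graph). -/
open Set

variable {S : Type*}

lemma adj_of_ssubset' [Semigroup S] (u v : IdealVert S) (h : u.1 ⊂ v.1) :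
    (inclusionIdealGraph S).Adj u v := by
  rw [inclusionIdealGraph, SimpleGraph.fromRel_adj]
  exact ⟨fun e => h.ne (congrArg Subtype.val e), Or.inl h⟩

lemma reach_aux [Semigroup S] (I J : IdealVert S) (hIJ : I.1 ⊂ J.1) (K : IdealVert S) :
    (inclusionIdealGraph S).Reachable K J := by
  by_cases hKJ : K.1 ⊆ J.1
  · rcases eq_or_ne K J with rfl | hne
    · exact SimpleGraph.Reachable.refl _
    · exact (adj_of_ssubset' K J
        ⟨hKJ, fun h' => hne (Subtype.ext (subset_antisymm hKJ h'))⟩).reachable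
  by_cases hJK : J.1 ⊆ K.1
  · exact ((adj_of_ssubset' J K ⟨hJK, hKJ⟩).reachable).symm
  by_cases hU : K.1 ∪ I.1 = Set.univ
  · obtain ⟨j, hjJ, hjI⟩ := exists_of_ssubset hIJ
    have hjK : j ∈ K.1 := by
      rcases Set.eq_univ_iff_forall.mp hU j with h' | h'
      · exact h'
      · exact absurd h' hjI
    have hM : IsNontrivialLeftIdeal (K.1 ∩ J.1) :=
      ⟨⟨⟨j, hjK, hjJ⟩, fun s x hx => ⟨K.2.1.2 s x hx.1, J.2.1.2 s x hx.2⟩⟩,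
        fun h' => J.2.2 (eq_univ_of_univ_subset (h' ▸ Set.inter_subset_right))⟩
    let Mv : IdealVert S := ⟨K.1 ∩ J.1, hM⟩
    have h1 : Mv.1 ⊂ K.1 := ⟨Set.inter_subset_left, fun h' => hKJ (fun x hx => (h' hx).2)⟩
    have h2 : Mv.1 ⊂ J.1 := ⟨Set.inter_subset_right, fun h' => hJK (fun x hx => (h' hx).1)⟩
    exact ((adj_of_ssubset' Mv K h1).reachable.symm).trans (adj_of_ssubset' Mv J h2).reachable
  · have hL : IsNontrivialLeftIdeal (K.1 ∪ I.1) :=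
      ⟨⟨K.2.1.1.inl, fun s x hx =>
        hx.elim (fun h' => Or.inl (K.2.1.2 s x h')) (fun h' => Or.inr (I.2.1.2 s x h'))⟩, hU⟩
    by_cases hKL : K.1 = K.1 ∪ I.1
    · have hIK : I.1 ⊂ K.1 :=
        ⟨fun x hx => hKL ▸ Or.inr hx, fun h' => hKJ (h'.trans hIJ.1)⟩
      exact ((adj_of_ssubset' I K hIK).reachable.symm).trans (adj_of_ssubset' I J hIJ).reachable
    · let Lv : IdealVert S := ⟨K.1 ∪ I.1, hL⟩
      have hKL' : K.1 ⊂ Lv.1 :=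
        ⟨Set.subset_union_left, fun h' => hKL (subset_antisymm Set.subset_union_left h')⟩
      have hIL : I.1 ⊂ Lv.1 :=
        ⟨Set.subset_union_right, fun h' => hKJ ((Set.subset_union_left.trans h').trans hIJ.1)⟩
      exact (adj_of_ssubset' K Lv hKL').reachable.trans
        (((adj_of_ssubset' I Lv hIL).reachable.symm).trans (adj_of_ssubset' I J hIJ).reachable)

/-- If `In(S)` is disconnected, then it has no edges. -/
theorem stmt4 [Semigroup S] (h : ¬ (inclusionIdealGraph S).Preconnected) :
    ∀ u v : IdealVert S, ¬ (inclusionIdealGraph S).Adj u v := by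
  intro u v hadj
  apply h
  rw [inclusionIdealGraph, SimpleGraph.fromRel_adj] at hadj
  obtain ⟨_, huv | hvu⟩ := hadj
  · exact fun a b => (reach_aux u v huv a).trans (reach_aux u v huv b).symm
  · exact fun a b => (reach_aux v u hvu a).trans (reach_aux v u hvu b).symm
end

section
/- If the inclusion ideal graph In(S) of a semigroup S is connected, then its diameter is at most 3. -/
open Set

variable {S : Type*}

/-! Two nontrivial left ideals `I`, `J` are at distance at most two through `I ∩ J` when it is
nonempty, and through `I ∪ J` when it is not all of `S`. Otherwise `J = Iᶜ`, and connectedness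
gives a neighbour `K` of `I`. If `K ⊂ I`, then `I ⊇ K ⊆ K ∪ J ⊇ J` is a path, as `K ∪ J` misses
`I \ K`; if `I ⊂ K`, then `I ⊆ K ⊇ K ∩ J ⊆ J` is a path, as `K ∩ J` contains `K \ I`. -/

section LeftIdeal

variable [Semigroup S] {I J : Set S}

lemma IsLeftIdeal.union (hI : IsLeftIdeal I) (hJ : IsLeftIdeal J) : IsLeftIdeal (I ∪ J) :=
  ⟨hI.1.mono subset_union_left, fun s x hx => hx.imp (hI.2 s x) (hJ.2 s x)⟩

lemma IsLeftIdeal.inter (hI : IsLeftIdeal I) (hJ : IsLeftIdeal J) (hIJ : (I ∩ J).Nonempty) :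
    IsLeftIdeal (I ∩ J) :=
  ⟨hIJ, fun s x hx => ⟨hI.2 s x hx.1, hJ.2 s x hx.2⟩⟩

lemma IsNontrivialLeftIdeal.union (hI : IsLeftIdeal I) (hJ : IsLeftIdeal J)
    (hIJ : I ∪ J ≠ univ) : IsNontrivialLeftIdeal (I ∪ J) :=
  ⟨hI.union hJ, hIJ⟩

lemma IsNontrivialLeftIdeal.inter (hI : IsNontrivialLeftIdeal I) (hJ : IsLeftIdeal J)
    (hIJ : (I ∩ J).Nonempty) : IsNontrivialLeftIdeal (I ∩ J) :=
  ⟨hI.1.inter hJ hIJ, fun h => hI.2 (univ_subset_iff.mp (h ▸ inter_subset_left))⟩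

end LeftIdeal

namespace inclusionIdealGraph

variable [Semigroup S]

lemma adj_iff {I J : IdealVert S} :
    (inclusionIdealGraph S).Adj I J ↔ I.1 ⊂ J.1 ∨ J.1 ⊂ I.1 := by
  rw [inclusionIdealGraph, SimpleGraph.fromRel_adj, and_iff_right_iff_imp]
  rintro (h | h) rfl <;> exact h.ne rfl

lemma dist_le_one_of_subset_or_subset {I J : IdealVert S} (hIJ : I.1 ⊆ J.1 ∨ J.1 ⊆ I.1) :
    (inclusionIdealGraph S).dist I J ≤ 1 := by
  rcases eq_or_ne I J with rfl | hne
  · simp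
  have hne' : I.1 ≠ J.1 := Subtype.coe_injective.ne hne
  refine (SimpleGraph.dist_eq_one_iff_adj.mpr (adj_iff.mpr ?_)).le
  exact hIJ.imp (·.ssubset_of_ne hne') (·.ssubset_of_ne hne'.symm)

lemma dist_le_two_of_le_one {I J W : IdealVert S} (hc : (inclusionIdealGraph S).Connected)
    (hI : (inclusionIdealGraph S).dist I W ≤ 1) (hJ : (inclusionIdealGraph S).dist W J ≤ 1) :
    (inclusionIdealGraph S).dist I J ≤ 2 :=
  (hc.dist_triangle (v := W)).trans (by omega)

lemma dist_le_two_of_subset {I J W : IdealVert S} (hc : (inclusionIdealGraph S).Connected)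
    (hI : I.1 ⊆ W.1) (hJ : J.1 ⊆ W.1) : (inclusionIdealGraph S).dist I J ≤ 2 :=
  dist_le_two_of_le_one hc (dist_le_one_of_subset_or_subset (.inl hI))
    (dist_le_one_of_subset_or_subset (.inr hJ))

lemma dist_le_two_of_superset {I J W : IdealVert S} (hc : (inclusionIdealGraph S).Connected)
    (hI : W.1 ⊆ I.1) (hJ : W.1 ⊆ J.1) : (inclusionIdealGraph S).dist I J ≤ 2 :=
  dist_le_two_of_le_one hc (dist_le_one_of_subset_or_subset (.inr hI))
    (dist_le_one_of_subset_or_subset (.inl hJ))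

lemma dist_le_three_of_eq_compl {I J : IdealVert S} (hc : (inclusionIdealGraph S).Connected)
    (hJ : J.1 = I.1ᶜ) : (inclusionIdealGraph S).dist I J ≤ 3 := by
  have hIJ : I ≠ J := by
    rintro rfl
    obtain ⟨x, hx⟩ := I.2.1.1
    exact (Set.ext_iff.mp hJ x).mp hx hx
  have : Nontrivial (IdealVert S) := ⟨⟨I, J, hIJ⟩⟩
  obtain ⟨K, hK⟩ := hc.preconnected.exists_adj_of_nontrivial I
  have hdistIK : (inclusionIdealGraph S).dist I K = 1 := SimpleGraph.dist_eq_one_iff_adj.mpr hK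
  suffices (inclusionIdealGraph S).dist K J ≤ 2 from (hc.dist_triangle (v := K)).trans (by omega)
  rcases adj_iff.mp hK with hIK | hKI
  · obtain ⟨x, hxK, hxI⟩ := exists_of_ssubset hIK
    have hxJ : x ∈ J.1 := hJ ▸ hxI
    exact dist_le_two_of_superset (W := ⟨_, K.2.inter J.2.1 ⟨x, hxK, hxJ⟩⟩) hc
      inter_subset_left inter_subset_right
  · obtain ⟨x, hxI, hxK⟩ := exists_of_ssubset hKI
    have hKJ : K.1 ∪ J.1 ≠ univ := fun h => by
      rcases h.symm.subset (mem_univ x) with hx | hx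
      · exact hxK hx
      · exact (hJ ▸ hx) hxI
    exact dist_le_two_of_subset (W := ⟨_, .union K.2.1 J.2.1 hKJ⟩) hc
      subset_union_left subset_union_right

end inclusionIdealGraph

/-- If `In(S)` is connected then its diameter is at most `3`. -/
theorem stmt7 [Semigroup S] (h : (inclusionIdealGraph S).Connected) :
    ∀ u v : IdealVert S, (inclusionIdealGraph S).dist u v ≤ 3 := by
  intro I J
  by_cases hinter : (I.1 ∩ J.1).Nonempty
  · exact (inclusionIdealGraph.dist_le_two_of_superset (W := ⟨_, I.2.inter J.2.1 hinter⟩) h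
      inter_subset_left inter_subset_right).trans (by norm_num)
  by_cases hunion : I.1 ∪ J.1 ≠ univ
  · exact (inclusionIdealGraph.dist_le_two_of_subset (W := ⟨_, .union I.2.1 J.2.1 hunion⟩) h
      subset_union_left subset_union_right).trans (by norm_num)
  have hcompl : IsCompl I.1 J.1 :=
    ⟨disjoint_iff_inter_eq_empty.mpr (not_nonempty_iff_eq_empty.mp hinter),
      codisjoint_iff.mpr (not_ne_iff.mp hunion)⟩
  exact inclusionIdealGraph.dist_le_three_of_eq_compl h (eq_compl_iff_isCompl.mpr hcompl.symm)
end

section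
/- If the inclusion ideal graph In(S) of a semigroup contains a cycle of length 4 or a cycle of length 5, then it contains a triangle. -/
open Set

variable {S : Type*}

lemma adj_iff' [Semigroup S] {a b : IdealVert S} :
    (inclusionIdealGraph S).Adj a b ↔ a ≠ b ∧ (a.1 ⊂ b.1 ∨ b.1 ⊂ a.1) := by
  simp [inclusionIdealGraph, SimpleGraph.fromRel_adj]

lemma tri' [Semigroup S] {a b c : IdealVert S} (h1 : a.1 ⊂ b.1) (h2 : b.1 ⊂ c.1) :
    ∃ x y z : IdealVert S, (inclusionIdealGraph S).Adj x y ∧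
      (inclusionIdealGraph S).Adj y z ∧ (inclusionIdealGraph S).Adj x z := by
  refine ⟨a, b, c, ?_, ?_, ?_⟩ <;> rw [adj_iff']
  · exact ⟨fun h => h1.ne (congrArg Subtype.val h), Or.inl h1⟩
  · exact ⟨fun h => h2.ne (congrArg Subtype.val h), Or.inl h2⟩
  · exact ⟨fun h => (h1.trans h2).ne (congrArg Subtype.val h), Or.inl (h1.trans h2)⟩

lemma union_nti [Semigroup S] {A C B : Set S} (hA : IsNontrivialLeftIdeal A)
    (hC : IsNontrivialLeftIdeal C) (hB : B ≠ univ) (hAB : A ⊆ B) (hCB : C ⊆ B) :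
    IsNontrivialLeftIdeal (A ∪ C) := by
  refine ⟨⟨hA.1.1.mono subset_union_left, ?_⟩, ?_⟩
  · rintro s x (hx | hx)
    · exact Or.inl (hA.1.2 s x hx)
    · exact Or.inr (hC.1.2 s x hx)
  · intro h
    exact hB (eq_univ_of_univ_subset (h ▸ union_subset hAB hCB))

lemma pat1 [Semigroup S] {a b c : IdealVert S} (hac : a ≠ c)
    (hK : IsNontrivialLeftIdeal (a.1 ∪ c.1)) (hKb : a.1 ∪ c.1 ≠ b.1)
    (h1 : a.1 ⊂ b.1) (h2 : c.1 ⊂ b.1) :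
    ∃ x y z : IdealVert S, (inclusionIdealGraph S).Adj x y ∧
      (inclusionIdealGraph S).Adj y z ∧ (inclusionIdealGraph S).Adj x z := by
  by_cases hKa : a.1 ∪ c.1 = a.1
  · have hca : c.1 ⊂ a.1 :=
      ssubset_of_subset_of_ne (subset_union_right.trans hKa.subset)
        (fun h => hac (Subtype.ext h.symm))
    exact tri' hca h1
  · by_cases hKc : a.1 ∪ c.1 = c.1
    · have hac' : a.1 ⊂ c.1 :=
        ssubset_of_subset_of_ne (subset_union_left.trans hKc.subset)
          (fun h => hac (Subtype.ext h))
      exact tri' hac' h2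
    · exact tri' (a := a) (b := ⟨a.1 ∪ c.1, hK⟩)
        (ssubset_of_subset_of_ne subset_union_left (fun h => hKa h.symm))
        (ssubset_of_subset_of_ne (union_subset h1.subset h2.subset) hKb)

lemma pat [Semigroup S] {a b c d : IdealVert S} (hac : a ≠ c) (hbd : b ≠ d)
    (h1 : a.1 ⊂ b.1) (h2 : c.1 ⊂ b.1) (h3 : c.1 ⊂ d.1) (h4 : a.1 ⊂ d.1) :
    ∃ x y z : IdealVert S, (inclusionIdealGraph S).Adj x y ∧
      (inclusionIdealGraph S).Adj y z ∧ (inclusionIdealGraph S).Adj x z := by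
  have hK : IsNontrivialLeftIdeal (a.1 ∪ c.1) :=
    union_nti a.2 c.2 b.2.2 h1.subset h2.subset
  by_cases hKb : a.1 ∪ c.1 = b.1
  · have hKd : a.1 ∪ c.1 ≠ d.1 := fun h => hbd (Subtype.ext (hKb.symm.trans h))
    exact pat1 hac hK hKd h4 h3
  · exact pat1 hac hK hKb h1 h2

/-- If `In(S)` has a cycle of length `4` or `5`, then it has a triangle. -/
theorem stmt9 [Semigroup S] (u : IdealVert S)
    (c : (inclusionIdealGraph S).Walk u u) (hc : c.IsCycle)
    (hl : c.length = 4 ∨ c.length = 5) :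
    ∃ a b d : IdealVert S, (inclusionIdealGraph S).Adj a b ∧
      (inclusionIdealGraph S).Adj b d ∧ (inclusionIdealGraph S).Adj a d := by
  rcases hl with h4 | h5
  · match c, hc, h4 with
    | .cons ha1 (.cons ha2 (.cons ha3 (.cons ha4 .nil))), hc, _ =>
      have hn := hc.2
      simp [SimpleGraph.Walk.support_cons] at hn
      have e1 := (adj_iff'.mp ha1).2
      have e2 := (adj_iff'.mp ha2).2
      have e3 := (adj_iff'.mp ha3).2
      have e4 := (adj_iff'.mp ha4).2
      have hac : u ≠ _ := fun h => hn.2.1.2 h.symm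
      have hbd := hn.1.2.1
      rcases e1 with e1 | e1 <;> rcases e2 with e2 | e2 <;>
        rcases e3 with e3 | e3 <;> rcases e4 with e4 | e4 <;>
        first
          | exact tri' e1 e2 | exact tri' e2 e1
          | exact tri' e2 e3 | exact tri' e3 e2
          | exact tri' e3 e4 | exact tri' e4 e3
          | exact tri' e4 e1 | exact tri' e1 e4
          | exact pat hac hbd e1 e2 e3 e4
          | exact pat hbd hac e1 e4 e3 e2
  · match c, h5 with
    | .cons ha1 (.cons ha2 (.cons ha3 (.cons ha4 (.cons ha5 .nil)))), _ =>
      have e1 := (adj_iff'.mp ha1).2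
      have e2 := (adj_iff'.mp ha2).2
      have e3 := (adj_iff'.mp ha3).2
      have e4 := (adj_iff'.mp ha4).2
      have e5 := (adj_iff'.mp ha5).2
      rcases e1 with e1 | e1 <;> rcases e2 with e2 | e2 <;>
        rcases e3 with e3 | e3 <;> rcases e4 with e4 | e4 <;>
        rcases e5 with e5 | e5 <;>
        first
          | exact tri' e1 e2 | exact tri' e2 e1
          | exact tri' e2 e3 | exact tri' e3 e2
          | exact tri' e3 e4 | exact tri' e4 e3
          | exact tri' e4 e5 | exact tri' e5 e4
          | exact tri' e5 e1 | exact tri' e1 e5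
end

section
/- The girth of the inclusion ideal graph In(S) of any semigroup S belongs to {3, 6, ∞}. -/
open Set

variable {S : Type*}

open SimpleGraph

section GraphAux

variable {α : Type*} {G : SimpleGraph α}

lemma aux_egirth_le_len {v : α} {p : G.Walk v v} (h : p.IsCycle) :
    G.egirth ≤ p.length :=
  iInf_le_of_le v (iInf_le_of_le p (iInf_le _ h))

lemma aux_cycle3 {a b c : α} (h1 : G.Adj a b) (h2 : G.Adj b c) (h3 : G.Adj c a) :
    G.egirth ≤ 3 := by
  have hc : (Walk.cons h1 (Walk.cons h2 (Walk.cons h3 Walk.nil))).IsCycle := by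
    have := h1.ne; have := h2.ne; have := h3.ne
    simp_all [Walk.isCycle_def, Walk.isTrail_def, Sym2.eq_iff, ne_comm]
  simpa using aux_egirth_le_len hc

lemma aux_cycle4 {a b c d : α} (h1 : G.Adj a b) (h2 : G.Adj b c) (h3 : G.Adj c d)
    (h4 : G.Adj d a) (hac : a ≠ c) (hbd : b ≠ d) : G.egirth ≤ 4 := by
  have hc : (Walk.cons h1 (Walk.cons h2 (Walk.cons h3 (Walk.cons h4 Walk.nil)))).IsCycle := by
    have := h1.ne; have := h2.ne; have := h3.ne; have := h4.ne
    simp_all [Walk.isCycle_def, Walk.isTrail_def, Sym2.eq_iff, ne_comm]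
  simpa using aux_egirth_le_len hc

lemma aux_cycle6 {a b c d e f : α} (h1 : G.Adj a b) (h2 : G.Adj b c) (h3 : G.Adj c d)
    (h4 : G.Adj d e) (h5 : G.Adj e f) (h6 : G.Adj f a)
    (hac : a ≠ c) (had : a ≠ d) (hae : a ≠ e) (hbd : b ≠ d) (hbe : b ≠ e)
    (hbf : b ≠ f) (hce : c ≠ e) (hcf : c ≠ f) (hdf : d ≠ f) : G.egirth ≤ 6 := by
  have hc : (Walk.cons h1 (Walk.cons h2 (Walk.cons h3 (Walk.cons h4
      (Walk.cons h5 (Walk.cons h6 Walk.nil)))))).IsCycle := by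
    have := h1.ne; have := h2.ne; have := h3.ne; have := h4.ne; have := h5.ne; have := h6.ne
    simp_all [Walk.isCycle_def, Walk.isTrail_def, Sym2.eq_iff, ne_comm]
  simpa using aux_egirth_le_len hc

lemma aux_support_getElem {u v : α} (p : G.Walk u v) (i : ℕ) (hi : i < p.support.length) :
    p.support[i] = p.getVert i := by
  induction p generalizing i with
  | nil =>
    simp only [Walk.support_nil, List.length_singleton] at hi
    interval_cases i
    simp [Walk.getVert]
  | cons h q ih =>
    cases i with
    | zero => simp [Walk.getVert]
    | succ n =>
      simp only [Walk.support_cons, List.getElem_cons_succ, Walk.getVert_cons_succ]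
      exact ih n (by
        simpa [Walk.length_support] using
          (by simpa [Walk.support_cons] using hi : n + 1 < q.support.length + 1))

lemma aux_cyc_inj {v : α} {w : G.Walk v v} (hc : w.IsCycle) {i j : ℕ}
    (hij : i < j) (hj : j < w.length) : w.getVert i ≠ w.getVert j := by
  have hnd : w.support.tail.Nodup := hc.support_nodup
  have hlen : w.support.length = w.length + 1 := Walk.length_support w
  have htl : w.support.tail.length = w.length := by
    rw [List.length_tail, hlen]; omega
  have hget : ∀ k : ℕ, (hk : k < w.length) → w.support.tail[k]'(by omega) = w.getVert (k+1) := by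
    intro k hk
    rw [List.getElem_tail]
    exact aux_support_getElem w (k+1) (by omega)
  intro heq
  rcases Nat.eq_zero_or_pos i with hi0 | hip
  · subst hi0
    have h0 : w.getVert j = w.getVert w.length := by
      rw [Walk.getVert_length, ← heq]; exact Walk.getVert_zero w
    have h1 : w.support.tail[j-1]'(by omega) = w.support.tail[w.length-1]'(by omega) := by
      rw [hget (j-1) (by omega), hget (w.length -1) (by omega)]
      have : j - 1 + 1 = j := by omega
      rw [this]
      have : w.length - 1 + 1 = w.length := by
        have := hc.three_le_length; omega
      rw [this]; exact h0
    have := (List.Nodup.getElem_inj_iff hnd).mp h1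
    omega
  · have h1 : w.support.tail[i-1]'(by omega) = w.support.tail[j-1]'(by omega) := by
      rw [hget (i-1) (by omega), hget (j-1) (by omega)]
      have hi' : i - 1 + 1 = i := by omega
      have hj' : j - 1 + 1 = j := by omega
      rw [hi', hj']; exact heq
    have := (List.Nodup.getElem_inj_iff hnd).mp h1
    omega

lemma aux_walk_parity {c : α → Prop} (hflip : ∀ x y, G.Adj x y → (c x ↔ ¬ c y))
    {x y : α} (p : G.Walk x y) : (c x ↔ c y) ↔ Even p.length := by
  induction p with
  | nil => simp
  | cons h q ih =>
    have := hflip _ _ h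
    simp only [Walk.length_cons, Nat.even_add_one, ← ih]
    tauto

end GraphAux

section IdealAux

variable [Semigroup S]

lemma aux_adj_iff {I J : IdealVert S} :
    (inclusionIdealGraph S).Adj I J ↔ I.1 ⊂ J.1 ∨ J.1 ⊂ I.1 := by
  rw [inclusionIdealGraph, SimpleGraph.fromRel_adj]
  constructor
  · rintro ⟨-, h⟩; exact h
  · intro h
    refine ⟨?_, h⟩
    rintro rfl
    rcases h with h | h <;> exact absurd h (ssubset_irrefl _)

lemma aux_adj_of_ssub {I J : IdealVert S} (h : I.1 ⊂ J.1) :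
    (inclusionIdealGraph S).Adj I J := aux_adj_iff.mpr (Or.inl h)

/-- A 3-chain of nontrivial left ideals gives a triangle. -/
lemma aux_chain3 {a b c : IdealVert S} (hab : a.1 ⊂ b.1) (hbc : b.1 ⊂ c.1) :
    (inclusionIdealGraph S).egirth = 3 := by
  have h1 := aux_adj_of_ssub hab
  have h2 := aux_adj_of_ssub hbc
  have h3 := (aux_adj_of_ssub (hab.trans hbc)).symm
  exact le_antisymm (aux_cycle3 h1 h2 h3) three_le_egirth

/-- The union of two nontrivial left ideals contained (as one of them is) in a
nontrivial ideal `b` is again a nontrivial left ideal. -/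
lemma aux_union_vert (a c b : IdealVert S) (hab : a.1 ⊆ b.1) (hcb : c.1 ⊆ b.1) :
    IsNontrivialLeftIdeal (a.1 ∪ c.1) := by
  refine ⟨⟨a.2.1.1.mono subset_union_left, ?_⟩, ?_⟩
  · rintro s x (hx | hx)
    · exact Or.inl (a.2.1.2 s x hx)
    · exact Or.inr (c.2.1.2 s x hx)
  · intro h
    exact b.2.2 (eq_univ_of_univ_subset (h ▸ union_subset hab hcb))

lemma aux_inter_vert (a c : IdealVert S) (hne : (a.1 ∩ c.1).Nonempty) :
    IsNontrivialLeftIdeal (a.1 ∩ c.1) := by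
  refine ⟨⟨hne, ?_⟩, ?_⟩
  · rintro s x ⟨hx1, hx2⟩
    exact ⟨a.2.1.2 s x hx1, c.2.1.2 s x hx2⟩
  · intro h
    exact a.2.2 (eq_univ_of_univ_subset (h ▸ inter_subset_left))

end IdealAux

section Core

variable [Semigroup S]
  (no3 : ∀ a b c : IdealVert S, a.1 ⊂ b.1 → b.1 ⊂ c.1 → False)

include no3

/-- Core argument ruling out 4-cycles. -/
lemma aux_core4 (a b c d : IdealVert S)
    (h1 : a.1 ⊂ b.1) (h2 : c.1 ⊂ b.1) (h3 : c.1 ⊂ d.1)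
    (hcomp : a.1 ⊂ d.1 ∨ d.1 ⊂ a.1) (hac : a ≠ c) (hbd : b ≠ d) : False := by
  have hacs : a.1 ≠ c.1 := fun h => hac (Subtype.ext h)
  have had : a.1 ⊂ d.1 := by
    rcases hcomp with h | h
    · exact h
    · exact absurd h1 (fun h1 => no3 d a b h h1)
  have hca : ¬ c.1 ⊆ a.1 := by
    intro h
    exact no3 c a b (ssubset_of_subset_of_ne h (Ne.symm hacs)) h1
  have hU : IsNontrivialLeftIdeal (a.1 ∪ c.1) :=
    aux_union_vert a c b h1.subset h2.subset
  set vU : IdealVert S := ⟨a.1 ∪ c.1, hU⟩ with hvU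
  have haU : a.1 ⊂ vU.1 := by
    refine ssubset_of_subset_of_ne subset_union_left ?_
    intro h
    apply hca
    rw [h]
    exact subset_union_right
  have hUb : vU.1 = b.1 := by
    by_contra hne
    exact no3 a vU b haU (ssubset_of_subset_of_ne (union_subset h1.subset h2.subset) hne)
  have hUd : vU.1 = d.1 := by
    by_contra hne
    exact no3 a vU d haU (ssubset_of_subset_of_ne (union_subset had.subset h3.subset) hne)
  exact hbd (Subtype.ext (hUb ▸ hUd))

/-- Core argument: a triangle-free configuration coming from a path of length four
in a cycle of length `≥ 8` produces a cycle of length at most `6`. -/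
lemma aux_core8 (a1 b1 a2 b2 a3 : IdealVert S)
    (h1 : a1.1 ⊂ b1.1) (h2 : a2.1 ⊂ b1.1) (h3 : a2.1 ⊂ b2.1) (h4 : a3.1 ⊂ b2.1)
    (d12 : a1 ≠ a2) (d13 : a1 ≠ a3) (d23 : a2 ≠ a3)
    (dB : b1 ≠ b2) (d1b2 : a1 ≠ b2) (d3b1 : a3 ≠ b1) :
    (inclusionIdealGraph S).egirth ≤ 6 := by
  have d12s : a1.1 ≠ a2.1 := fun h => d12 (Subtype.ext h)
  have d13s : a1.1 ≠ a3.1 := fun h => d13 (Subtype.ext h)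
  have d23s : a2.1 ≠ a3.1 := fun h => d23 (Subtype.ext h)
  -- a1 ∩ a2 = ∅
  have hi12 : a1.1 ∩ a2.1 = ∅ := by
    by_contra h
    have hne : (a1.1 ∩ a2.1).Nonempty := nonempty_iff_ne_empty.mpr h
    set vY : IdealVert S := ⟨a1.1 ∩ a2.1, aux_inter_vert a1 a2 hne⟩ with hvY
    have hYa1 : vY.1 ⊂ a1.1 := by
      refine ssubset_of_subset_of_ne inter_subset_left ?_
      intro hEq
      have : a1.1 ⊆ a2.1 := by rw [← hEq]; exact inter_subset_right
      exact no3 a1 a2 b1 (ssubset_of_subset_of_ne this d12s) h2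
    exact no3 vY a1 b1 hYa1 h1
  have hi23 : a2.1 ∩ a3.1 = ∅ := by
    by_contra h
    have hne : (a2.1 ∩ a3.1).Nonempty := nonempty_iff_ne_empty.mpr h
    set vY : IdealVert S := ⟨a2.1 ∩ a3.1, aux_inter_vert a2 a3 hne⟩ with hvY
    have hYa2 : vY.1 ⊂ a2.1 := by
      refine ssubset_of_subset_of_ne inter_subset_left ?_
      intro hEq
      have : a2.1 ⊆ a3.1 := by rw [← hEq]; exact inter_subset_right
      exact no3 a2 a3 b2 (ssubset_of_subset_of_ne this d23s) h4
    exact no3 vY a2 b1 hYa2 h2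
  -- X = a1 ∪ a3 is a nontrivial ideal
  have hXuniv : a1.1 ∪ a3.1 ≠ univ := by
    intro h
    obtain ⟨x, hx⟩ := a2.2.1.1
    have : x ∈ a1.1 ∪ a3.1 := h ▸ mem_univ x
    rcases this with hx1 | hx3
    · exact absurd (show x ∈ a1.1 ∩ a2.1 from ⟨hx1, hx⟩) (by rw [hi12]; exact notMem_empty x)
    · exact absurd (show x ∈ a2.1 ∩ a3.1 from ⟨hx, hx3⟩) (by rw [hi23]; exact notMem_empty x)
  have hX : IsNontrivialLeftIdeal (a1.1 ∪ a3.1) := by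
    refine ⟨⟨a1.2.1.1.mono subset_union_left, ?_⟩, hXuniv⟩
    rintro s x (hx | hx)
    · exact Or.inl (a1.2.1.2 s x hx)
    · exact Or.inr (a3.2.1.2 s x hx)
  set vX : IdealVert S := ⟨a1.1 ∪ a3.1, hX⟩ with hvX
  have hXa1 : a1.1 ⊂ vX.1 := by
    refine ssubset_of_subset_of_ne subset_union_left ?_
    intro h
    have : a3.1 ⊆ a1.1 := by rw [h]; exact subset_union_right
    exact no3 a3 a1 b1 (ssubset_of_subset_of_ne this (Ne.symm d13s)) h1
  have hXa3 : a3.1 ⊂ vX.1 := by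
    refine ssubset_of_subset_of_ne subset_union_right ?_
    intro h
    have : a1.1 ⊆ a3.1 := by rw [h]; exact subset_union_left
    exact no3 a1 a3 b2 (ssubset_of_subset_of_ne this d13s) h4
  by_cases hXb1 : vX = b1
  · -- a3 ⊂ b1 : 4-cycle b1 a2 b2 a3
    have h5 : a3.1 ⊂ b1.1 := by
      refine ssubset_of_subset_of_ne ?_ (fun h => d3b1 (Subtype.ext h))
      have : a3.1 ⊆ vX.1 := hXa3.subset
      rwa [hXb1] at this
    refine le_trans (aux_cycle4 (aux_adj_of_ssub h2).symm (aux_adj_of_ssub h3)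
      (aux_adj_of_ssub h4).symm (aux_adj_of_ssub h5) dB d23) (by norm_num)
  by_cases hXb2 : vX = b2
  · -- a1 ⊂ b2 : 4-cycle a1 b1 a2 b2
    have h5 : a1.1 ⊂ b2.1 := by
      refine ssubset_of_subset_of_ne ?_ (fun h => d1b2 (Subtype.ext h))
      have : a1.1 ⊆ vX.1 := hXa1.subset
      rwa [hXb2] at this
    refine le_trans (aux_cycle4 (aux_adj_of_ssub h1) (aux_adj_of_ssub h2).symm
      (aux_adj_of_ssub h3) (aux_adj_of_ssub h5).symm d12 dB) (by norm_num)
  by_cases hXa2 : vX = a2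
  · exact absurd h2 (fun h2 => no3 a1 a2 b1 (hXa2 ▸ hXa1) h2)
  -- genuine 6-cycle a1 b1 a2 b2 a3 vX
  have e1 := aux_adj_of_ssub h1
  have e2 := (aux_adj_of_ssub h2).symm
  have e3 := aux_adj_of_ssub h3
  have e4 := (aux_adj_of_ssub h4).symm
  have e5 := aux_adj_of_ssub hXa3 |>.symm
  have e6 := (aux_adj_of_ssub hXa1).symm
  exact aux_cycle6 e1 e2 e3 e4 e5.symm e6
    d12 d1b2 d13 dB (fun h => d3b1 h.symm) (fun h => hXb1 h.symm)
    d23 (fun h => hXa2 h.symm) (fun h => hXb2 h.symm)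

end Core

/-- The girth of `In(S)` is `3`, `6` or `∞`. -/
theorem stmt10 [Semigroup S] :
    (inclusionIdealGraph S).egirth = 3 ∨ (inclusionIdealGraph S).egirth = 6 ∨
      (inclusionIdealGraph S).egirth = ⊤ := by
  by_cases h3 : (inclusionIdealGraph S).egirth = 3
  · exact Or.inl h3
  by_cases hac : (inclusionIdealGraph S).IsAcyclic
  · exact Or.inr (Or.inr (egirth_eq_top.mpr hac))
  refine Or.inr (Or.inl ?_)
  obtain ⟨v, w, hw, hlen⟩ := exists_egirth_eq_length.mpr hac
  -- no 3-chains
  have no3 : ∀ a b c : IdealVert S, a.1 ⊂ b.1 → b.1 ⊂ c.1 → False := by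
    intro a b c hab hbc
    exact h3 (aux_chain3 hab hbc)
  -- the graph is properly two-colored, so `w` has even length
  have hflip : ∀ x y : IdealVert S, (inclusionIdealGraph S).Adj x y →
      ((∃ z : IdealVert S, x.1 ⊂ z.1) ↔ ¬ ∃ z : IdealVert S, y.1 ⊂ z.1) := by
    intro x y hxy
    rcases aux_adj_iff.mp hxy with h | h
    · constructor
      · rintro - ⟨z, hz⟩; exact no3 x y z h hz
      · intro _; exact ⟨y, h⟩
    · constructor
      · intro hx
        exact absurd hx (by rintro ⟨z, hz⟩; exact no3 y x z h hz)
      · intro hy; exact absurd ⟨x, h⟩ hy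
  have hev : Even w.length := (aux_walk_parity hflip w).mp Iff.rfl
  have hlen3 : 3 ≤ w.length := hw.three_le_length
  have hne3 : w.length ≠ 3 := by
    intro h
    apply h3
    rw [hlen, h]; rfl
  rw [hlen]
  suffices h : w.length = 6 by rw [h]; rfl
  by_contra hne6
  have hcase : w.length = 4 ∨ 8 ≤ w.length := by
    obtain ⟨k, hk⟩ := hev; omega
  have hcmp : ∀ i, i < w.length →
      (w.getVert i).1 ⊂ (w.getVert (i+1)).1 ∨ (w.getVert (i+1)).1 ⊂ (w.getVert i).1 :=
    fun i hi => aux_adj_iff.mp (w.adj_getVert_succ hi)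
  have hnei : ∀ i j, i < j → j < w.length → w.getVert i ≠ w.getVert j :=
    fun i j hij hj => aux_cyc_inj hw hij hj
  rcases hcase with h4 | h8
  · -- length 4 case
    have hP4 : w.getVert 4 = w.getVert 0 := by
      rw [Walk.getVert_zero, ← h4, Walk.getVert_length]
    rcases hcmp 0 (by omega) with h0 | h0
    · have hc2 : (w.getVert 2).1 ⊂ (w.getVert 1).1 :=
        (hcmp 1 (by omega)).resolve_left (fun h => absurd h0 (fun h0 => no3 _ _ _ h0 h))
      have hc3 : (w.getVert 2).1 ⊂ (w.getVert 3).1 :=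
        (hcmp 2 (by omega)).resolve_right (fun h => absurd hc2 (fun hc2 => no3 _ _ _ h hc2))
      have hcomp : (w.getVert 0).1 ⊂ (w.getVert 3).1 ∨ (w.getVert 3).1 ⊂ (w.getVert 0).1 := by
        rcases hcmp 3 (by omega) with h | h
        · right; rwa [hP4] at h
        · left; rwa [hP4] at h
      exact aux_core4 no3 (w.getVert 0) (w.getVert 1) (w.getVert 2) (w.getVert 3)
        h0 hc2 hc3 hcomp (hnei 0 2 (by omega) (by omega)) (hnei 1 3 (by omega) (by omega))
    · -- P1 ⊂ P0
      have hc1 : (w.getVert 1).1 ⊂ (w.getVert 2).1 :=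
        (hcmp 1 (by omega)).resolve_right (fun h => absurd h0 (fun h0 => no3 _ _ _ h h0))
      have hc2 : (w.getVert 3).1 ⊂ (w.getVert 2).1 :=
        (hcmp 2 (by omega)).resolve_left (fun h => absurd hc1 (fun hc1 => no3 _ _ _ hc1 h))
      have hc3 : (w.getVert 3).1 ⊂ (w.getVert 0).1 := by
        have := (hcmp 3 (by omega)).resolve_right (fun h => absurd hc2 (fun hc2 => no3 _ _ _ h hc2))
        rwa [hP4] at this
      exact aux_core4 no3 (w.getVert 1) (w.getVert 2) (w.getVert 3) (w.getVert 0)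
        hc1 hc2 hc3 (Or.inl h0) (hnei 1 3 (by omega) (by omega))
        (fun h => (hnei 0 2 (by omega) (by omega)) h.symm)
  · -- length ≥ 8 case
    have key : (inclusionIdealGraph S).egirth ≤ 6 := by
      rcases hcmp 0 (by omega) with h0 | h0
      · have hc2 : (w.getVert 2).1 ⊂ (w.getVert 1).1 :=
          (hcmp 1 (by omega)).resolve_left (fun h => absurd h0 (fun h0 => no3 _ _ _ h0 h))
        have hc3 : (w.getVert 2).1 ⊂ (w.getVert 3).1 :=
          (hcmp 2 (by omega)).resolve_right (fun h => absurd hc2 (fun hc2 => no3 _ _ _ h hc2))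
        have hc4 : (w.getVert 4).1 ⊂ (w.getVert 3).1 :=
          (hcmp 3 (by omega)).resolve_left (fun h => absurd hc3 (fun hc3 => no3 _ _ _ hc3 h))
        exact aux_core8 no3 (w.getVert 0) (w.getVert 1) (w.getVert 2) (w.getVert 3) (w.getVert 4)
          h0 hc2 hc3 hc4
          (hnei 0 2 (by omega) (by omega)) (hnei 0 4 (by omega) (by omega))
          (hnei 2 4 (by omega) (by omega)) (hnei 1 3 (by omega) (by omega))
          (hnei 0 3 (by omega) (by omega)) (fun h => (hnei 1 4 (by omega) (by omega)) h.symm)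
      · have hc1 : (w.getVert 1).1 ⊂ (w.getVert 2).1 :=
          (hcmp 1 (by omega)).resolve_right (fun h => absurd h0 (fun h0 => no3 _ _ _ h h0))
        have hc2 : (w.getVert 3).1 ⊂ (w.getVert 2).1 :=
          (hcmp 2 (by omega)).resolve_left (fun h => absurd hc1 (fun hc1 => no3 _ _ _ hc1 h))
        have hc3 : (w.getVert 3).1 ⊂ (w.getVert 4).1 :=
          (hcmp 3 (by omega)).resolve_right (fun h => absurd hc2 (fun hc2 => no3 _ _ _ h hc2))
        have hc4 : (w.getVert 5).1 ⊂ (w.getVert 4).1 :=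
          (hcmp 4 (by omega)).resolve_left (fun h => absurd hc3 (fun hc3 => no3 _ _ _ hc3 h))
        exact aux_core8 no3 (w.getVert 1) (w.getVert 2) (w.getVert 3) (w.getVert 4) (w.getVert 5)
          hc1 hc2 hc3 hc4
          (hnei 1 3 (by omega) (by omega)) (hnei 1 5 (by omega) (by omega))
          (hnei 3 5 (by omega) (by omega)) (hnei 2 4 (by omega) (by omega))
          (hnei 1 4 (by omega) (by omega)) (fun h => (hnei 2 5 (by omega) (by omega)) h.symm)
    rw [hlen] at key
    have : w.length ≤ 6 := by exact_mod_cast key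
    omega
end

section
/- For a semigroup S with finitely many left ideals, the inclusion ideal graph In(S) contains no induced cycle of odd length at least 5 (no odd hole). -/
open Set

variable {S : Type*}

/-!
`In(S)` is the comparability graph of the strict order `⊂` on nontrivial left ideals, and no
comparability graph of a transitive relation contains an induced odd cycle `C_n`, `n ≥ 5`.
Orient each edge of such a cycle along the relation. Two consecutive edges cannot point the
same way, since transitivity would then relate vertices `i` and `i + 2`, a chord. So the
orientation of the edge `{i, i + 1}` alternates with `i`, which is a proper 2-colouring of the
odd cycle `C_n`: impossible.
-/

lemma Fin.ne_add_two {m : ℕ} (hm : 1 ≤ m) (i : Fin (m + 2)) : i ≠ i + 2 := by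
  simp [Fin.ext_iff, Nat.mod_eq_of_lt (show 2 < m + 2 by omega)]

namespace SimpleGraph

lemma cycleGraph_adj_iff_eq_add_one {m : ℕ} {u v : Fin (m + 2)} :
    (cycleGraph (m + 2)).Adj u v ↔ u = v + 1 ∨ v = u + 1 := by
  rw [cycleGraph_adj, sub_eq_iff_eq_add', sub_eq_iff_eq_add']

lemma cycleGraph_adj_add_one {m : ℕ} (i : Fin (m + 2)) : (cycleGraph (m + 2)).Adj i (i + 1) :=
  cycleGraph_adj_iff_eq_add_one.mpr (Or.inr rfl)

lemma cycleGraph_not_adj_add_two {m : ℕ} (hm : 3 ≤ m) (i : Fin (m + 2)) :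
    ¬ (cycleGraph (m + 2)).Adj i (i + 2) := by
  rw [cycleGraph_adj, sub_add_cancel_left, add_sub_cancel_left]
  simp [Fin.ext_iff, Fin.val_neg, Nat.mod_eq_of_lt (show 2 < m + 2 by omega)]
  omega

def cycleGraph.coloringOfNeAddOne {α : Type*} {m : ℕ} (c : Fin (m + 2) → α)
    (hc : ∀ i, c (i + 1) ≠ c i) : (cycleGraph (m + 2)).Coloring α :=
  Coloring.mk c fun h => by
    rcases cycleGraph_adj_iff_eq_add_one.mp h with rfl | rfl
    exacts [hc _, (hc _).symm]

lemma not_colorable_two_cycleGraph_of_odd {n : ℕ} (hn : 2 ≤ n) (hodd : Odd n) :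
    ¬ (cycleGraph n).Colorable 2 := fun hc => by
  have := hc.chromaticNumber_le
  rw [chromaticNumber_cycleGraph_of_odd n hn hodd] at this
  norm_num at this

theorem isEmpty_cycleGraph_embedding_fromRel {V : Type*} {r : V → V → Prop} [IsTrans V r]
    {n : ℕ} (hodd : Odd n) (hn : 5 ≤ n) :
    IsEmpty (cycleGraph n ↪g fromRel r) := by
  obtain ⟨m, rfl⟩ : ∃ m, n = m + 2 := ⟨n - 2, by omega⟩
  refine ⟨fun f => ?_⟩
  have hedge (i : Fin (m + 2)) : r (f i) (f (i + 1)) ∨ r (f (i + 1)) (f i) :=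
    ((fromRel_adj _ _ _).mp (f.map_adj_iff.mpr (cycleGraph_adj_add_one i))).2
  have hchord (i : Fin (m + 2)) : ¬ r (f i) (f (i + 2)) ∧ ¬ r (f (i + 2)) (f i) := by
    have hne : f i ≠ f (i + 2) := f.injective.ne (Fin.ne_add_two (by omega) i)
    have := mt f.map_adj_iff.mp (cycleGraph_not_adj_add_two (by omega) i)
    rw [fromRel_adj] at this
    tauto
  let orientation (i : Fin (m + 2)) : Prop := r (f i) (f (i + 1))
  have hflip (i : Fin (m + 2)) : orientation (i + 1) ≠ orientation i := by
    intro heq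
    have hiff := Iff.of_eq heq
    have hnext := hedge (i + 1)
    -- after `add_assoc`, `i + (1 + 1)` is `i + 2` up to defeq, as `hchord` needs
    simp only [orientation, add_assoc] at hiff hnext
    by_cases hi : r (f i) (f (i + 1))
    · exact (hchord i).1 (_root_.trans hi (hiff.mpr hi))
    · exact (hchord i).2
        (_root_.trans (hnext.resolve_left (mt hiff.mp hi)) ((hedge i).resolve_left hi))
  have hcol := (cycleGraph.coloringOfNeAddOne orientation hflip).colorable
  rw [Fintype.card_prop] at hcol
  exact not_colorable_two_cycleGraph_of_odd (by omega) hodd hcol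

end SimpleGraph

theorem stmt11_general [Semigroup S]
    (n : ℕ) (hodd : Odd n) (hn : 5 ≤ n) :
    IsEmpty (SimpleGraph.cycleGraph n ↪g inclusionIdealGraph S) :=
  have : IsTrans (IdealVert S) (fun I J => I.1 ⊂ J.1) := ⟨fun _ _ _ => ssubset_trans⟩
  SimpleGraph.isEmpty_cycleGraph_embedding_fromRel hodd hn

/-- For a semigroup with finitely many left ideals, `In(S)` contains no induced odd
cycle of length at least `5`. -/
theorem stmt11 [Semigroup S] (hfin : {I : Set S | IsLeftIdeal I}.Finite)
    (n : ℕ) (hodd : Odd n) (hn : 5 ≤ n) :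
    IsEmpty (SimpleGraph.cycleGraph n ↪g inclusionIdealGraph S) :=
  stmt11_general n hodd hn
end

section
/- For a semigroup S with finitely many left ideals, the complement of the inclusion ideal graph In(S) contains no induced cycle of odd length at least 5; consequently (with the strong perfect graph theorem) In(S) is perfect. -/
open Set

variable {S : Type*}

/-- The clique number of a graph, as `ℕ∞`. -/
noncomputable def cliqueNumE {V : Type*} (G : SimpleGraph V) : ℕ∞ :=
  ⨆ (s : Finset V) (_ : G.IsClique (s : Set V)), (s.card : ℕ∞)

/-- A graph is perfect if every induced subgraph has chromatic number equal to its
clique number. -/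
def IsPerfect {V : Type*} (G : SimpleGraph V) : Prop :=
  ∀ A : Set V, (G.induce A).chromaticNumber = cliqueNumE (G.induce A)

/-!
`In(S)` is the comparability graph of the nontrivial left ideals ordered by inclusion, and both
claims hold for the comparability graph of any preorder. Colouring every element by its height
uses no more colours than the largest clique has vertices, and induced subgraphs of comparability
graphs are again comparability graphs. If `v₀, …, v_{n-1}` is an induced cycle of the complement,
consecutive elements are incomparable and all others comparable. The comparison of `v_i` with
`v_{i+j}` then points the same way for all `2 ≤ j ≤ n - 2`, because a switch between `j` and
`j + 1` would make `v_{i+j}` and `v_{i+j+1}` comparable by transitivity. Hence `v_i` compares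
oppositely with `v_{i+2}` and `v_{i-2}`, so whether `v_i < v_{i+2}` alternates along `i ↦ i + 2`,
which forces `n` to be even.
-/

open SimpleGraph Order
open scoped Fin.NatCast Fin.CommRing

def comparabilityGraph (α : Type*) [Preorder α] : SimpleGraph α :=
  fromRel (· < ·)

section Comparability

variable {α : Type*} [Preorder α]

lemma comparabilityGraph_adj {a b : α} :
    (comparabilityGraph α).Adj a b ↔ a < b ∨ b < a := by
  rw [comparabilityGraph, fromRel_adj, and_iff_right_iff_imp]
  rintro (h | h)
  exacts [h.ne, h.ne']

lemma induce_comparabilityGraph (A : Set α) :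
    (comparabilityGraph α).induce A = comparabilityGraph A := by
  ext a b
  simp only [comap_adj, Function.Embedding.subtype_apply, comparabilityGraph_adj,
    Subtype.coe_lt_coe]

lemma le_cliqueNumE {V : Type*} {G : SimpleGraph V} {s : Finset V}
    (hs : G.IsClique (s : Set V)) : (s.card : ℕ∞) ≤ cliqueNumE G :=
  le_iSup₂ (f := fun (t : Finset V) (_ : G.IsClique (t : Set V)) => (t.card : ℕ∞)) s hs

lemma cliqueNumE_le_chromaticNumber {V : Type*} (G : SimpleGraph V) :
    cliqueNumE G ≤ G.chromaticNumber :=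
  iSup₂_le fun _ hs => hs.card_le_chromaticNumber

lemma LTSeries.isClique_range (p : LTSeries α) :
    (comparabilityGraph α).IsClique (Set.range p) := by
  rintro _ ⟨i, rfl⟩ _ ⟨j, rfl⟩ hij
  rw [comparabilityGraph_adj]
  rcases lt_or_gt_of_ne (ne_of_apply_ne p hij) with h | h
  exacts [Or.inl (p.strictMono h), Or.inr (p.strictMono h)]

lemma LTSeries.length_add_one_le_cliqueNumE (p : LTSeries α) :
    (p.length + 1 : ℕ∞) ≤ cliqueNumE (comparabilityGraph α) := by
  classical
  have h := le_cliqueNumE (s := Finset.univ.image p) (by simpa using p.isClique_range)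
  rwa [Finset.card_image_of_injective _ p.strictMono.injective, Finset.card_univ,
    Fintype.card_fin, Nat.cast_add_one] at h

lemma height_lt_of_cliqueNumE_eq {k : ℕ} (hk : cliqueNumE (comparabilityGraph α) = k)
    (a : α) : height a < k := by
  by_contra! h
  obtain ⟨p, -, hp⟩ := exists_series_of_le_height a h
  have := p.length_add_one_le_cliqueNumE
  rw [hk, hp] at this
  norm_cast at this
  omega

lemma colorable_of_cliqueNumE_eq {k : ℕ} (hk : cliqueNumE (comparabilityGraph α) = k) :
    (comparabilityGraph α).Colorable k := by
  have hlt := height_lt_of_cliqueNumE_eq hk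
  have hnat (a : α) : height a = (height a).toNat := (ENat.natCast_toNat (hlt a).ne_top).symm
  refine ⟨Coloring.mk (fun a => ⟨(height a).toNat, ?_⟩) ?_⟩
  · have := hlt a
    rw [hnat a] at this
    exact_mod_cast this
  · intro a b hab hcol
    have heq : height a = height b := by rw [hnat a, hnat b, Fin.mk.inj hcol]
    rcases comparabilityGraph_adj.mp hab with h | h
    · exact (height_strictMono h ((hlt a).trans (ENat.natCast_lt_top k))).ne heq
    · exact (height_strictMono h ((hlt b).trans (ENat.natCast_lt_top k))).ne' heq

theorem chromaticNumber_comparabilityGraph :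
    (comparabilityGraph α).chromaticNumber = cliqueNumE (comparabilityGraph α) := by
  refine le_antisymm ?_ (cliqueNumE_le_chromaticNumber _)
  cases h : cliqueNumE (comparabilityGraph α) using ENat.recTopCoe with
  | top => exact le_top
  | coe k => exact (colorable_of_cliqueNumE_eq h).chromaticNumber_le

theorem isPerfect_comparabilityGraph : IsPerfect (comparabilityGraph α) := fun A => by
  rw [induce_comparabilityGraph]
  exact chromaticNumber_comparabilityGraph

end Comparability

theorem even_of_forall_add_iff_not {M : Type*} [AddMonoid M] {P : M → Prop} {a : M}
    (hP : ∀ x, P (x + a) ↔ ¬P x) {n : ℕ} (hn : n • a = 0) : Even n := by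
  have key (k : ℕ) : P (k • a) ↔ (P 0 ↔ Even k) := by
    induction k with
    | zero => simp
    | succ k ih => rw [succ_nsmul, hP, ih, Nat.even_add_one]; tauto
  have := key n
  rw [hn] at this
  tauto

section CyclicSequence

variable {α : Type*} [Preorder α] {n : ℕ} [NeZero n] {v : Fin n → α}

lemma lt_add_natCast_iff_lt_add_natCast_succ
    (hcons : ∀ i, ¬v i < v (i + 1) ∧ ¬v (i + 1) < v i)
    (hcomp : ∀ i (j : ℕ), 2 ≤ j → j ≤ n - 2 → v i < v (i + j) ∨ v (i + j) < v i)
    (i : Fin n) {j : ℕ} (hj : 2 ≤ j) (hjn : j + 1 ≤ n - 2) :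
    v i < v (i + j) ↔ v i < v (i + (j + 1 : ℕ)) := by
  have hsucc : i + ((j + 1 : ℕ) : Fin n) = i + j + 1 := by push_cast; ring
  have hnext := hcomp i (j + 1) (by omega) hjn
  rw [hsucc] at hnext ⊢
  obtain ⟨hlt, hgt⟩ := hcons (i + j)
  exact ⟨fun h => hnext.resolve_right fun h' => hgt (h'.trans h),
    fun h => (hcomp i j hj (by omega)).resolve_right fun h' => hlt (h'.trans h)⟩

lemma lt_add_two_iff_lt_sub_two (hn : 4 ≤ n)
    (hcons : ∀ i, ¬v i < v (i + 1) ∧ ¬v (i + 1) < v i)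
    (hcomp : ∀ i (j : ℕ), 2 ≤ j → j ≤ n - 2 → v i < v (i + j) ∨ v (i + j) < v i)
    (i : Fin n) : v i < v (i + 2) ↔ v i < v (i - 2) := by
  have key (j : ℕ) (hj : 2 ≤ j) : j ≤ n - 2 → (v i < v (i + 2) ↔ v i < v (i + j)) := by
    induction j, hj using Nat.le_induction with
    | base => intro; simp
    | succ j hj ih =>
      intro hjn
      exact (ih (by omega)).trans (lt_add_natCast_iff_lt_add_natCast_succ hcons hcomp i hj hjn)
  have hsub : i + ((n - 2 : ℕ) : Fin n) = i - 2 := by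
    rw [Nat.cast_sub (by omega), Fin.natCast_self]; ring
  rw [key (n - 2) (by omega) le_rfl, hsub]

lemma lt_add_two_add_two_iff_not (hn : 4 ≤ n)
    (hcons : ∀ i, ¬v i < v (i + 1) ∧ ¬v (i + 1) < v i)
    (hcomp : ∀ i (j : ℕ), 2 ≤ j → j ≤ n - 2 → v i < v (i + j) ∨ v (i + j) < v i)
    (i : Fin n) : v (i + 2) < v (i + 2 + 2) ↔ ¬v i < v (i + 2) := by
  rw [lt_add_two_iff_lt_sub_two hn hcons hcomp, add_sub_cancel_right]
  have hi := hcomp i 2 le_rfl (by omega)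
  push_cast at hi
  exact ⟨fun h h' => lt_asymm h h', hi.resolve_left⟩

theorem even_of_cyclic_incomparable (hn : 4 ≤ n)
    (hcons : ∀ i, ¬v i < v (i + 1) ∧ ¬v (i + 1) < v i)
    (hcomp : ∀ i (j : ℕ), 2 ≤ j → j ≤ n - 2 → v i < v (i + j) ∨ v (i + j) < v i) :
    Even n :=
  even_of_forall_add_iff_not (P := fun i => v i < v (i + 2)) (a := 2)
    (lt_add_two_add_two_iff_not hn hcons hcomp) (by rw [nsmul_eq_mul, Fin.natCast_self, zero_mul])

end CyclicSequence

lemma Fin.natCast_ne_zero_of_pos_of_lt {n k : ℕ} [NeZero n] (hk : 0 < k) (hkn : k < n) :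
    (k : Fin n) ≠ 0 := fun h =>
  absurd (Nat.le_of_dvd hk (Fin.natCast_eq_zero.mp h)) (by omega)

lemma cycleGraph_not_adj_add_natCast {m j : ℕ} (i : Fin (m + 2)) (hj : 2 ≤ j) (hjm : j ≤ m) :
    ¬(cycleGraph (m + 2)).Adj i (i + j) := by
  rw [cycleGraph_adj, sub_add_cancel_left, add_sub_cancel_left, neg_eq_iff_eq_neg]
  rintro (h | h)
  · exact Fin.natCast_ne_zero_of_pos_of_lt (n := m + 2) (k := j + 1) (by omega) (by omega)
      (by push_cast; rw [h]; ring)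
  · exact Fin.natCast_ne_zero_of_pos_of_lt (n := m + 2) (k := j - 1) (by omega) (by omega)
      (by rw [Nat.cast_sub (by omega), h]; ring)

theorem even_of_cycleGraph_embedding_compl_comparabilityGraph {α : Type*} [Preorder α]
    {n : ℕ} (hn : 4 ≤ n) (f : cycleGraph n ↪g (comparabilityGraph α)ᶜ) : Even n := by
  obtain ⟨m, rfl⟩ : ∃ m, n = m + 2 := ⟨n - 2, by omega⟩
  have hadj (i j : Fin (m + 2)) :
      (cycleGraph (m + 2)).Adj i j ↔ i ≠ j ∧ ¬(f i < f j ∨ f j < f i) := by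
    rw [← f.map_adj_iff, compl_adj, comparabilityGraph_adj, f.injective.ne_iff]
  refine even_of_cyclic_incomparable (v := f) hn (fun i => ?_) (fun i j hj hjm => ?_)
  · have := ((hadj i (i + 1)).mp (cycleGraph_adj.mpr (Or.inr (add_sub_cancel_left i 1)))).2
    tauto
  · have hne : i ≠ i + j := fun h =>
      Fin.natCast_ne_zero_of_pos_of_lt (by omega) (by omega) (add_eq_left.mp h.symm)
    have := (hadj i (i + j)).not.mp (cycleGraph_not_adj_add_natCast i hj (by omega))
    tauto

instance [Semigroup S] : PartialOrder (IdealVert S) :=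
  inferInstanceAs (PartialOrder {I : Set S // IsNontrivialLeftIdeal I})

lemma inclusionIdealGraph_eq_comparabilityGraph [Semigroup S] :
    inclusionIdealGraph S = comparabilityGraph (IdealVert S) :=
  rfl

theorem stmt12_general [Semigroup S] :
    (∀ n : ℕ, Odd n → 5 ≤ n →
        IsEmpty (SimpleGraph.cycleGraph n ↪g (inclusionIdealGraph S)ᶜ)) ∧
      IsPerfect (inclusionIdealGraph S) := by
  rw [inclusionIdealGraph_eq_comparabilityGraph]
  refine ⟨fun n hodd h5 => ⟨fun f => ?_⟩, isPerfect_comparabilityGraph⟩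
  exact Nat.not_even_iff_odd.mpr hodd
    (even_of_cycleGraph_embedding_compl_comparabilityGraph (by omega) f)

/-- For a semigroup with finitely many left ideals, the complement of `In(S)` contains
no induced odd cycle of length at least `5`; consequently, by the strong perfect graph
theorem, `In(S)` is perfect. -/
theorem stmt12 [Semigroup S] (hfin : {I : Set S | IsLeftIdeal I}.Finite) :
    (∀ n : ℕ, Odd n → 5 ≤ n →
        IsEmpty (SimpleGraph.cycleGraph n ↪g (inclusionIdealGraph S)ᶜ)) ∧
      IsPerfect (inclusionIdealGraph S) :=
  stmt12_general
end

section
/- If a semigroup S equals the union of its n minimal left ideals (n ≥ 2), then the clique number of In(S) is n − 1. -/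
open Set

variable {S : Type*}

/-- For `x` in a minimal left ideal `M`, the left ideal `Sx` equals `M`. -/
lemma range_mul_eq_of_minimal [Semigroup S] {M : Set S} (hM : IsMinimalLeftIdeal M)
    {x : S} (hx : x ∈ M) : Set.range (· * x) = M := by
  apply hM.2
  · refine ⟨⟨x * x, ⟨x, rfl⟩⟩, ?_⟩
    rintro s y ⟨t, rfl⟩
    exact ⟨s * t, mul_assoc s t x⟩
  · rintro y ⟨s, rfl⟩
    exact hM.1.1.2 s x hx

/-- If a semigroup is the union of its `n ≥ 2` minimal left ideals, then the clique
number of `In(S)` is `n - 1`. -/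
theorem stmt13 [Semigroup S] (n : ℕ) (hn : 2 ≤ n) (I : Fin n → Set S)
    (hinj : Function.Injective I) (hmin : ∀ i, IsMinimalLeftIdeal (I i))
    (hall : ∀ J : Set S, IsMinimalLeftIdeal J → ∃ i, J = I i)
    (hunion : (⋃ i, I i) = Set.univ) :
    (inclusionIdealGraph S).cliqueNum = n - 1 := by
  classical
  -- distinct minimal ideals are disjoint
  have hdisj : ∀ (i j : Fin n) (x : S), x ∈ I i → x ∈ I j → i = j := by
    intro i j x hi hj
    apply hinj
    rw [← range_mul_eq_of_minimal (hmin i) hi, ← range_mul_eq_of_minimal (hmin j) hj]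
  -- a minimal ideal meeting a left ideal is contained in it
  have hsub : ∀ (J : Set S), IsLeftIdeal J → ∀ (i : Fin n) (x : S),
      x ∈ I i → x ∈ J → I i ⊆ J := by
    intro J hJ i x hxi hxJ y hy
    rw [← range_mul_eq_of_minimal (hmin i) hxi] at hy
    obtain ⟨s, rfl⟩ := hy
    exact hJ.2 s x hxJ
  -- the index set of a nontrivial left ideal
  set φ : Set S → Finset (Fin n) := fun J => Finset.univ.filter (fun i => I i ⊆ J) with hφ
  have hdecomp : ∀ J : Set S, IsNontrivialLeftIdeal J → J = ⋃ i ∈ φ J, I i := by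
    intro J hJ
    apply Set.Subset.antisymm
    · intro x hxJ
      have : x ∈ ⋃ i, I i := hunion ▸ Set.mem_univ x
      obtain ⟨i, hi⟩ := Set.mem_iUnion.1 this
      have hIJ : I i ⊆ J := hsub J hJ.1 i x hi hxJ
      exact Set.mem_biUnion (Finset.mem_filter.2 ⟨Finset.mem_univ i, hIJ⟩) hi
    · intro x hx
      obtain ⟨i, hi, hxi⟩ := Set.mem_iUnion₂.1 hx
      exact (Finset.mem_filter.1 hi).2 hxi
  have hφmono : ∀ J K : Set S, J ⊆ K → φ J ⊆ φ K := by
    intro J K hJK i hi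
    simp only [hφ, Finset.mem_filter, Finset.mem_univ, true_and] at hi ⊢
    exact hi.trans hJK
  have hφssub : ∀ J K : Set S, IsNontrivialLeftIdeal J → IsNontrivialLeftIdeal K →
      J ⊂ K → φ J ⊂ φ K := by
    intro J K hJ hK hJK
    refine ⟨hφmono J K hJK.1, fun h => hJK.2 ?_⟩
    have : φ J = φ K := Finset.Subset.antisymm (hφmono J K hJK.1) h
    rw [hdecomp K hK, hdecomp J hJ, this]
  have hφcard : ∀ J : Set S, IsNontrivialLeftIdeal J →
      1 ≤ (φ J).card ∧ (φ J).card ≤ n - 1 := by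
    intro J hJ
    constructor
    · rw [Nat.one_le_iff_ne_zero]
      obtain ⟨x, hxJ⟩ := hJ.1.1
      have : x ∈ ⋃ i, I i := hunion ▸ Set.mem_univ x
      obtain ⟨i, hi⟩ := Set.mem_iUnion.1 this
      exact Finset.card_ne_zero_of_mem
        (Finset.mem_filter.2 ⟨Finset.mem_univ i, hsub J hJ.1 i x hi hxJ⟩)
    · have hne : φ J ≠ Finset.univ := by
        intro h
        apply hJ.2
        apply Set.eq_univ_of_univ_subset
        rw [← hunion]
        intro x hx
        obtain ⟨i, hi⟩ := Set.mem_iUnion.1 hx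
        have : I i ⊆ J := by
          have := Finset.mem_filter.1 (h ▸ Finset.mem_univ i)
          exact this.2
        exact this hi
      have : (φ J).card < n := by
        have := Finset.card_lt_card (Finset.ssubset_univ_iff.2 hne)
        simpa using this
      omega
  -- upper bound for clique sizes
  have hupper : ∀ (m : ℕ) (t : Finset (IdealVert S)),
      (inclusionIdealGraph S).IsNClique m t → m ≤ n - 1 := by
    intro m t ht
    rw [← ht.card_eq]
    have hmap : ∀ v ∈ t, (φ v.1).card ∈ Finset.Icc 1 (n - 1) := by
      intro v hv
      obtain ⟨h1, h2⟩ := hφcard v.1 v.2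
      simp [Finset.mem_Icc, h1, h2]
    have hinjOn : Set.InjOn (fun v : IdealVert S => (φ v.1).card) t := by
      intro v hv w hw hvw
      by_contra hne
      have hadj := ht.isClique hv hw hne
      rw [inclusionIdealGraph, SimpleGraph.fromRel_adj] at hadj
      rcases hadj.2 with h | h
      · exact absurd hvw (Nat.ne_of_lt (Finset.card_lt_card (hφssub _ _ v.2 w.2 h)))
      · exact absurd hvw.symm (Nat.ne_of_lt (Finset.card_lt_card (hφssub _ _ w.2 v.2 h)))
    calc t.card ≤ (Finset.Icc 1 (n - 1)).card :=
          Finset.card_le_card_of_injOn _ hmap hinjOn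
      _ = n - 1 := by rw [Nat.card_Icc]; omega
  -- the chain of ideals
  set K : ℕ → Set S := fun k => ⋃ i ∈ Finset.univ.filter (fun i : Fin n => (i : ℕ) ≤ k), I i
    with hK
  have hKnotmem : ∀ (k : ℕ) (j : Fin n) (x : S), k < (j : ℕ) → x ∈ I j → x ∉ K k := by
    intro k j x hkj hxj hx
    obtain ⟨i, hi, hxi⟩ := Set.mem_iUnion₂.1 hx
    have : i = j := hdisj i j x hxi hxj
    have hik : (i : ℕ) ≤ k := (Finset.mem_filter.1 hi).2
    omega
  have hKmem : ∀ (k : ℕ) (j : Fin n) (x : S), (j : ℕ) ≤ k → x ∈ I j → x ∈ K k := by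
    intro k j x hjk hxj
    exact Set.mem_biUnion (Finset.mem_filter.2 ⟨Finset.mem_univ j, hjk⟩) hxj
  have hKnt : ∀ k : ℕ, k < n - 1 → IsNontrivialLeftIdeal (K k) := by
    intro k hk
    refine ⟨⟨?_, ?_⟩, ?_⟩
    · obtain ⟨x, hx⟩ := (hmin ⟨0, by omega⟩).1.1.1
      exact ⟨x, hKmem k ⟨0, by omega⟩ x (Nat.zero_le k) hx⟩
    · intro s x hx
      obtain ⟨i, hi, hxi⟩ := Set.mem_iUnion₂.1 hx
      exact Set.mem_biUnion hi ((hmin i).1.1.2 s x hxi)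
    · intro h
      obtain ⟨x, hx⟩ := (hmin ⟨n - 1, by omega⟩).1.1.1
      exact hKnotmem k ⟨n - 1, by omega⟩ x (by simpa using hk) hx (h ▸ Set.mem_univ x)
  have hKchain : ∀ k l : ℕ, k < l → l < n → K k ⊂ K l := by
    intro k l hkl hln
    constructor
    · intro x hx
      obtain ⟨i, hi, hxi⟩ := Set.mem_iUnion₂.1 hx
      exact hKmem l i x (le_trans (Finset.mem_filter.1 hi).2 (le_of_lt hkl)) hxi
    · intro h
      obtain ⟨x, hx⟩ := (hmin ⟨l, hln⟩).1.1.1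
      exact hKnotmem k ⟨l, hln⟩ x (by simpa using hkl) hx
        (h (hKmem l ⟨l, hln⟩ x (by simp) hx))
  -- build the clique
  set g : Fin (n - 1) → IdealVert S := fun k => ⟨K k, hKnt k k.2⟩ with hg
  have hginj : Function.Injective g := by
    intro k l hkl
    by_contra hne
    have hne' : (k : ℕ) ≠ (l : ℕ) := fun h => hne (Fin.ext h)
    rcases Nat.lt_or_ge (k : ℕ) (l : ℕ) with h | h
    · exact (hKchain k l h (by omega)).2 (le_of_eq (congrArg Subtype.val hkl).symm)
    · have h' : (l : ℕ) < (k : ℕ) := by omega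
      exact (hKchain l k h' (by omega)).2 (le_of_eq (congrArg Subtype.val hkl))
  set t : Finset (IdealVert S) := Finset.univ.image g with hT
  have htclique : (inclusionIdealGraph S).IsNClique (n - 1) t := by
    constructor
    · intro a ha b hb hne
      simp only [hT, Finset.coe_image, Set.mem_image] at ha hb
      obtain ⟨k, _, rfl⟩ := ha
      obtain ⟨l, _, rfl⟩ := hb
      have hkl : (k : ℕ) ≠ (l : ℕ) := fun h => hne (congrArg g (Fin.ext h))
      rw [inclusionIdealGraph, SimpleGraph.fromRel_adj]
      refine ⟨hne, ?_⟩
      rcases Nat.lt_or_ge (k : ℕ) (l : ℕ) with h | h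
      · exact Or.inl (hKchain k l h (by omega))
      · exact Or.inr (hKchain l k (by omega) (by omega))
    · rw [hT, Finset.card_image_of_injective _ hginj, Finset.card_univ, Fintype.card_fin]
  -- conclude
  have hbdd : BddAbove {m | ∃ s, (inclusionIdealGraph S).IsNClique m s} := by
    exact ⟨n - 1, fun m hm => by obtain ⟨s, hs⟩ := hm; exact hupper m s hs⟩
  rw [SimpleGraph.cliqueNum]
  apply le_antisymm
  · have hne : {m | ∃ s, (inclusionIdealGraph S).IsNClique m s}.Nonempty :=
      ⟨0, ∅, SimpleGraph.isNClique_empty.2 rfl⟩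
    apply csSup_le hne
    rintro m ⟨s, hs⟩
    exact hupper m s hs
  · exact le_csSup hbdd ⟨t, htclique⟩
end

section
/- Let S be a completely simple semigroup with n ≥ 3 minimal left ideals. Then In(S) is connected and has diameter exactly 3. -/
open Set

variable {S : Type*}

section Aux

variable [Semigroup S]

lemma aux_inter_leftIdeal {A B : Set S} (hA : IsLeftIdeal A) (hB : IsLeftIdeal B)
    (h : (A ∩ B).Nonempty) : IsLeftIdeal (A ∩ B) :=
  ⟨h, fun s x hx => ⟨hA.2 s x hx.1, hB.2 s x hx.2⟩⟩

lemma aux_minimal_disjoint {A B : Set S} (hA : IsMinimalLeftIdeal A)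
    (hB : IsMinimalLeftIdeal B) (hne : A ≠ B) : A ∩ B = ∅ := by
  by_contra h
  have hne' : (A ∩ B).Nonempty := Set.nonempty_iff_ne_empty.mpr h
  have hI := aux_inter_leftIdeal hA.1.1 hB.1.1 hne'
  have h1 := hA.2 _ hI Set.inter_subset_left
  have h2 := hB.2 _ hI Set.inter_subset_right
  exact hne (h1.symm.trans h2)

lemma aux_mul_right_minimal {M : Set S} (hM : IsMinimalLeftIdeal M) (s : S)
    {N : Set S} (hN : IsNontrivialLeftIdeal N) :
    IsMinimalLeftIdeal ((fun y => y * s) '' M) := by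
  set Ms := (fun y => y * s) '' M with hMsdef
  have hleft : IsLeftIdeal Ms := by
    constructor
    · exact hM.1.1.1.image _
    · rintro t x ⟨y, hy, rfl⟩
      exact ⟨t * y, hM.1.1.2 t y hy, (mul_assoc t y s).symm ▸ rfl⟩
  have hmin' : ∀ J : Set S, IsLeftIdeal J → J ⊆ Ms → J = Ms := by
    intro J hJ hsub
    have hM' : IsLeftIdeal {y ∈ M | y * s ∈ J} := by
      constructor
      · obtain ⟨j, hj⟩ := hJ.1
        obtain ⟨y, hy, rfl⟩ := hsub hj
        exact ⟨y, hy, hj⟩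
      · intro t y hy
        refine ⟨hM.1.1.2 t y hy.1, ?_⟩
        have := hJ.2 t _ hy.2
        rwa [← mul_assoc] at this
    have heq := hM.2 _ hM' (Set.sep_subset _ _)
    apply subset_antisymm hsub
    rintro x ⟨y, hy, rfl⟩
    have : y ∈ {y ∈ M | y * s ∈ J} := heq.symm ▸ hy
    exact this.2
  have hnt : Ms ≠ Set.univ := by
    intro h
    have := hmin' N hN.1 (by rw [h]; exact Set.subset_univ N)
    exact hN.2 (this.trans h)
  exact ⟨⟨hleft, hnt⟩, hmin'⟩

lemma aux_cover {n : ℕ} (hS : IsCompletelySimple S) (I : Fin n → Set S) (hpos : 0 < n)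
    (hmin : ∀ i, IsMinimalLeftIdeal (I i))
    (hall : ∀ J : Set S, IsMinimalLeftIdeal J → ∃ i, J = I i) :
    ⋃ i, I i = Set.univ := by
  apply hS.1
  refine ⟨?_, ?_, ?_⟩
  · obtain ⟨x, hx⟩ := (hmin ⟨0, hpos⟩).1.1.1
    exact ⟨x, Set.mem_iUnion.mpr ⟨_, hx⟩⟩
  · intro s x hx
    obtain ⟨i, hi⟩ := Set.mem_iUnion.mp hx
    exact Set.mem_iUnion.mpr ⟨i, (hmin i).1.1.2 s x hi⟩
  · intro s x hx
    obtain ⟨i, hi⟩ := Set.mem_iUnion.mp hx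
    have hmm := aux_mul_right_minimal (hmin i) s (hmin ⟨0, hpos⟩).1
    obtain ⟨j, hj⟩ := hall _ hmm
    exact Set.mem_iUnion.mpr ⟨j, hj ▸ ⟨x, hi, rfl⟩⟩

lemma aux_walk_short {V : Type*} {G : SimpleGraph V} {u v : V} (p : G.Walk u v)
    (h : p.length ≤ 2) : u = v ∨ G.Adj u v ∨ ∃ w, G.Adj u w ∧ G.Adj w v := by
  match p with
  | .nil => exact Or.inl rfl
  | .cons h1 .nil => exact Or.inr (Or.inl h1)
  | .cons h1 (.cons h2 .nil) => exact Or.inr (Or.inr ⟨_, h1, h2⟩)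
  | .cons _ (.cons _ (.cons _ q)) => simp [SimpleGraph.Walk.length_cons] at h

end Aux

/-- For a completely simple semigroup with `n ≥ 3` minimal left ideals, `In(S)` is
connected with diameter exactly `3`. -/
theorem stmt14 [Semigroup S] (hS : IsCompletelySimple S) (n : ℕ) (hn : 3 ≤ n)
    (I : Fin n → Set S) (hinj : Function.Injective I)
    (hmin : ∀ i, IsMinimalLeftIdeal (I i))
    (hall : ∀ J : Set S, IsMinimalLeftIdeal J → ∃ i, J = I i) :
    (inclusionIdealGraph S).Connected ∧
      (∀ u v : IdealVert S, (inclusionIdealGraph S).dist u v ≤ 3) ∧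
      ∃ u v : IdealVert S, (inclusionIdealGraph S).dist u v = 3 := by
  set G := inclusionIdealGraph S with hGdef
  have hpos : 0 < n := by omega
  have hIne : ∀ i, (I i).Nonempty := fun i => (hmin i).1.1.1
  have hcov : ⋃ i, I i = Set.univ := aux_cover hS I hpos hmin hall
  have hdisj : ∀ i j : Fin n, i ≠ j → I i ∩ I j = ∅ := fun i j hij =>
    aux_minimal_disjoint (hmin i) (hmin j) (fun h => hij (hinj h))
  have hmem : ∀ x : S, ∃ i, x ∈ I i := fun x => by
    have : x ∈ ⋃ i, I i := hcov.symm ▸ Set.mem_univ x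
    exact Set.mem_iUnion.mp this
  -- absorbing: a minimal ideal meeting a left ideal is contained in it
  have habs : ∀ (J : Set S), IsLeftIdeal J → ∀ i : Fin n, (I i ∩ J).Nonempty → I i ⊆ J := by
    intro J hJ i hne
    have hI := aux_inter_leftIdeal (hmin i).1.1 hJ hne
    have := (hmin i).2 _ hI Set.inter_subset_left
    exact fun x hx => (this.symm ▸ hx : x ∈ I i ∩ J).2
  set U : Set (Fin n) → Set S := fun A => ⋃ i ∈ A, I i with hUdef
  have hUvert : ∀ A : Set (Fin n), A.Nonempty → A ≠ Set.univ → IsNontrivialLeftIdeal (U A) := by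
    intro A ⟨i, hi⟩ hA
    refine ⟨⟨?_, ?_⟩, ?_⟩
    · obtain ⟨x, hx⟩ := hIne i
      exact ⟨x, Set.mem_biUnion hi hx⟩
    · intro s x hx
      obtain ⟨j, hj, hxj⟩ := Set.mem_iUnion₂.mp hx
      exact Set.mem_biUnion hj ((hmin j).1.1.2 s x hxj)
    · obtain ⟨j, hj⟩ := Set.ne_univ_iff_exists_notMem A |>.mp hA
      obtain ⟨x, hx⟩ := hIne j
      intro h
      have : x ∈ U A := h.symm ▸ Set.mem_univ x
      obtain ⟨k, hk, hxk⟩ := Set.mem_iUnion₂.mp this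
      have hkj : k ≠ j := fun e => hj (e ▸ hk)
      exact absurd (hdisj k j hkj ▸ ⟨hxk, hx⟩ : x ∈ (∅ : Set S)) (Set.notMem_empty x)
  -- the index set of a vertex
  have hAne : ∀ u : IdealVert S, {i | I i ⊆ u.1}.Nonempty := by
    intro u
    obtain ⟨x, hx⟩ := u.2.1.1
    obtain ⟨i, hi⟩ := hmem x
    exact ⟨i, habs u.1 u.2.1 i ⟨x, hi, hx⟩⟩
  have hAproper : ∀ u : IdealVert S, {i | I i ⊆ u.1} ≠ Set.univ := by
    intro u h
    apply u.2.2
    apply Set.eq_univ_of_univ_subset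
    rw [← hcov]
    refine Set.iUnion_subset fun i => ?_
    have : i ∈ {i | I i ⊆ u.1} := h ▸ Set.mem_univ i
    exact this
  have hdec : ∀ u : IdealVert S, u.1 ⊆ U {i | I i ⊆ u.1} := by
    intro u x hx
    obtain ⟨i, hi⟩ := hmem x
    exact Set.mem_biUnion (habs u.1 u.2.1 i ⟨x, hi, hx⟩) hi
  have hUsub : ∀ u : IdealVert S, U {i | I i ⊆ u.1} ⊆ u.1 := by
    intro u
    exact Set.iUnion₂_subset fun i hi => hi
  -- adjacency from strict containment
  have hadj : ∀ u v : IdealVert S, u ≠ v → u.1 ⊆ v.1 → G.Adj u v := by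
    intro u v hne hsub
    rw [hGdef, inclusionIdealGraph, SimpleGraph.fromRel_adj]
    exact ⟨hne, Or.inl (hsub.ssubset_of_ne fun h => hne (Subtype.ext h))⟩
  have hreach1 : ∀ u v : IdealVert S, u.1 ⊆ v.1 → G.Reachable u v := by
    intro u v hsub
    by_cases h : u = v
    · exact h ▸ SimpleGraph.Reachable.refl u
    · exact (hadj u v h hsub).reachable
  have hdist1 : ∀ u v : IdealVert S, u.1 ⊆ v.1 ∨ v.1 ⊆ u.1 → G.dist u v ≤ 1 := by
    have key : ∀ u v : IdealVert S, u.1 ⊆ v.1 → G.dist u v ≤ 1 := by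
      intro u v hsub
      by_cases h : u = v
      · subst h; simp [SimpleGraph.dist_self]
      · simpa using SimpleGraph.dist_le (SimpleGraph.Walk.cons (hadj u v h hsub) .nil)
    intro u v h
    rcases h with h | h
    · exact key u v h
    · exact SimpleGraph.dist_comm ▸ key v u h
  -- chain of length ≤ 3 between any two vertices
  have hchain : ∀ u v : IdealVert S, ∃ w₁ w₂ : IdealVert S,
      (u.1 ⊆ w₁.1 ∨ w₁.1 ⊆ u.1) ∧ (w₁.1 ⊆ w₂.1 ∨ w₂.1 ⊆ w₁.1) ∧
        (w₂.1 ⊆ v.1 ∨ v.1 ⊆ w₂.1) := by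
    intro u v
    set A := {i | I i ⊆ u.1} with hAdef
    set B := {i | I i ⊆ v.1} with hBdef
    by_cases hAB : (A ∩ B).Nonempty
    · -- go down through U (A ∩ B)
      have hprop : A ∩ B ≠ Set.univ := fun h =>
        hAproper u (Set.eq_univ_of_univ_subset (h ▸ Set.inter_subset_left))
      refine ⟨⟨U (A ∩ B), hUvert _ hAB hprop⟩, v, Or.inr ?_, Or.inl ?_, Or.inl subset_rfl⟩
      · exact Set.iUnion₂_subset fun i hi => hi.1
      · exact Set.iUnion₂_subset fun i hi => hi.2
    · by_cases hABu : A ∪ B = Set.univ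
      · -- A and B are complementary; use singletons
        obtain ⟨a, ha⟩ := hAne u
        obtain ⟨b, hb⟩ := hAne v
        have hanb : a ∉ B := fun h => hAB ⟨a, ha, h⟩
        have hbna : b ∉ A := fun h => hAB ⟨b, h, hb⟩
        have hab : a ≠ b := fun h => hanb (h ▸ hb)
        have hj : ∃ j : Fin n, j ≠ a ∧ j ≠ b := by
          by_contra h
          push_neg at h
          have hsub : (Finset.univ : Finset (Fin n)) ⊆ {a, b} := by
            intro j _
            rcases eq_or_ne j a with rfl | hja
            · exact Finset.mem_insert_self _ _
            · exact Finset.mem_insert_of_mem (Finset.mem_singleton.mpr (h j hja))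
          have h1 := Finset.card_le_card hsub
          have h2 : ({a, b} : Finset (Fin n)).card ≤ 2 :=
            (Finset.card_insert_le _ _).trans (by simp)
          simp [Finset.card_univ] at h1
          omega
        obtain ⟨j, hja, hjb⟩ := hj
        by_cases hA1 : ∃ a' ∈ A, a' ≠ a
        · -- path u ⊇ U{a} ⊆ U({a} ∪ B) ⊇ v
          obtain ⟨a', ha', haa⟩ := hA1
          have h1 : ({a} : Set (Fin n)) ≠ Set.univ := fun h => hab.symm (by
            have : b ∈ ({a} : Set (Fin n)) := h ▸ Set.mem_univ b
            simpa using this)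
          have h2 : ({a} : Set (Fin n)) ∪ B ≠ Set.univ := by
            intro h
            have : a' ∈ ({a} : Set (Fin n)) ∪ B := h ▸ Set.mem_univ a'
            rcases this with h' | h'
            · exact haa (by simpa using h')
            · exact hAB ⟨a', ha', h'⟩
          refine ⟨⟨U {a}, hUvert _ ⟨a, rfl⟩ h1⟩,
            ⟨U ({a} ∪ B), hUvert _ ⟨a, Or.inl rfl⟩ h2⟩, Or.inr ?_, Or.inl ?_, Or.inr ?_⟩
          · exact Set.iUnion₂_subset fun i hi => by
              rcases hi with rfl; exact ha
          · exact Set.iUnion₂_subset fun i hi =>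
              Set.subset_iUnion₂ (s := fun i _ => I i) i (Or.inl hi)
          · exact (hdec v).trans (Set.iUnion₂_subset fun i hi =>
              Set.subset_iUnion₂ (s := fun i _ => I i) i (Or.inr hi))
        · -- A = {a}; then j ∈ B and j ≠ b, path u ⊆ U({b} ∪ A) ⊇ U{b} ⊆ v
          push_neg at hA1
          have hjB : j ∈ B := by
            have : j ∈ A ∪ B := hABu ▸ Set.mem_univ j
            rcases this with h' | h'
            · exact absurd (hA1 j h') hja
            · exact h'
          have h1 : ({b} : Set (Fin n)) ∪ A ≠ Set.univ := by
            intro h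
            have : j ∈ ({b} : Set (Fin n)) ∪ A := h ▸ Set.mem_univ j
            rcases this with h' | h'
            · exact hjb (by simpa using h')
            · exact hja (hA1 j h')
          have h2 : ({b} : Set (Fin n)) ≠ Set.univ := fun h => hab (by
            have : a ∈ ({b} : Set (Fin n)) := h ▸ Set.mem_univ a
            simpa using this)
          refine ⟨⟨U ({b} ∪ A), hUvert _ ⟨b, Or.inl rfl⟩ h1⟩,
            ⟨U {b}, hUvert _ ⟨b, rfl⟩ h2⟩, Or.inl ?_, Or.inr ?_, Or.inl ?_⟩
          · exact (hdec u).trans (Set.iUnion₂_subset fun i hi =>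
              Set.subset_iUnion₂ (s := fun i _ => I i) i (Or.inr hi))
          · exact Set.iUnion₂_subset fun i hi =>
              Set.subset_iUnion₂ (s := fun i _ => I i) i (Or.inl hi)
          · exact Set.iUnion₂_subset fun i hi => by
              rcases hi with rfl; exact hb
      · -- go up through U (A ∪ B)
        have hne : (A ∪ B).Nonempty := (hAne u).mono Set.subset_union_left
        refine ⟨⟨U (A ∪ B), hUvert _ hne hABu⟩, v, Or.inl ?_, Or.inr ?_, Or.inl subset_rfl⟩
        · exact (hdec u).trans (Set.iUnion₂_subset fun i hi =>
            Set.subset_iUnion₂ (s := fun i _ => I i) i (Or.inl hi))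
        · exact (hdec v).trans (Set.iUnion₂_subset fun i hi =>
            Set.subset_iUnion₂ (s := fun i _ => I i) i (Or.inr hi))
  -- connectivity
  have hreach : ∀ u v : IdealVert S, G.Reachable u v := by
    intro u v
    obtain ⟨w₁, w₂, h1, h2, h3⟩ := hchain u v
    have r1 : G.Reachable u w₁ := by
      rcases h1 with h | h
      · exact hreach1 u w₁ h
      · exact (hreach1 w₁ u h).symm
    have r2 : G.Reachable w₁ w₂ := by
      rcases h2 with h | h
      · exact hreach1 w₁ w₂ h
      · exact (hreach1 w₂ w₁ h).symm
    have r3 : G.Reachable w₂ v := by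
      rcases h3 with h | h
      · exact hreach1 w₂ v h
      · exact (hreach1 v w₂ h).symm
    exact (r1.trans r2).trans r3
  set i0 : Fin n := ⟨0, by omega⟩ with hi0
  have hi0val : i0.val = 0 := by rw [hi0]
  have hconn : G.Connected := by
    rw [SimpleGraph.connected_iff]
    exact ⟨hreach, ⟨⟨I i0, (hmin i0).1⟩⟩⟩
  -- diameter upper bound
  have hdist3 : ∀ u v : IdealVert S, G.dist u v ≤ 3 := by
    intro u v
    obtain ⟨w₁, w₂, h1, h2, h3⟩ := hchain u v
    have t1 := hconn.dist_triangle (u := u) (v := w₁) (w := v)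
    have t2 := hconn.dist_triangle (u := w₁) (v := w₂) (w := v)
    have d1 := hdist1 u w₁ h1
    have d2 := hdist1 w₁ w₂ h2
    have d3 := hdist1 w₂ v h3
    omega
  refine ⟨hconn, hdist3, ?_⟩
  -- the extremal pair
  have h1ne : ({i0}ᶜ : Set (Fin n)).Nonempty := by
    refine ⟨⟨1, by omega⟩, ?_⟩
    simp only [Set.mem_compl_iff, Set.mem_singleton_iff]
    intro h
    have := congrArg Fin.val h
    rw [hi0val] at this
    simp at this
  have h1pr : ({i0}ᶜ : Set (Fin n)) ≠ Set.univ := by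
    intro h
    have : i0 ∈ ({i0}ᶜ : Set (Fin n)) := h ▸ Set.mem_univ i0
    simp at this
  set u0 : IdealVert S := ⟨I i0, (hmin i0).1⟩ with hu0
  set v0 : IdealVert S := ⟨U {i0}ᶜ, hUvert _ h1ne h1pr⟩ with hv0
  have hdisj0 : u0.1 ∩ v0.1 = ∅ := by
    apply Set.eq_empty_iff_forall_notMem.mpr
    rintro x ⟨hx1, hx2⟩
    obtain ⟨j, hj, hxj⟩ := Set.mem_iUnion₂.mp hx2
    have hji : i0 ≠ j := fun e => hj (e ▸ rfl)
    exact absurd (hdisj i0 j hji ▸ ⟨hx1, hxj⟩ : x ∈ (∅ : Set S)) (Set.notMem_empty x)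
  have hcup0 : u0.1 ∪ v0.1 = Set.univ := by
    apply Set.eq_univ_of_forall
    intro x
    obtain ⟨j, hj⟩ := hmem x
    by_cases h : j = i0
    · exact Or.inl (show x ∈ I i0 from h ▸ hj)
    · exact Or.inr (Set.mem_biUnion (by simpa using h) hj)
  have hu0v0 : u0 ≠ v0 := by
    intro h
    obtain ⟨x, hx⟩ := hIne i0
    have : x ∈ u0.1 ∩ v0.1 := ⟨hx, h ▸ hx⟩
    exact absurd (hdisj0 ▸ this) (Set.notMem_empty x)
  have hnadj : ¬ G.Adj u0 v0 := by
    rw [hGdef, inclusionIdealGraph, SimpleGraph.fromRel_adj]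
    rintro ⟨-, h | h⟩
    · obtain ⟨x, hx⟩ := hIne i0
      have : x ∈ u0.1 ∩ v0.1 := ⟨hx, h.1 hx⟩
      exact absurd (hdisj0 ▸ this) (Set.notMem_empty x)
    · obtain ⟨j, hj⟩ := h1ne
      obtain ⟨x, hx⟩ := hIne j
      have hxv : x ∈ v0.1 := Set.mem_biUnion hj hx
      have : x ∈ u0.1 ∩ v0.1 := ⟨h.1 hxv, hxv⟩
      exact absurd (hdisj0 ▸ this) (Set.notMem_empty x)
  have hnocommon : ¬ ∃ w : IdealVert S, G.Adj u0 w ∧ G.Adj w v0 := by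
    rintro ⟨w, hw1, hw2⟩
    rw [hGdef, inclusionIdealGraph, SimpleGraph.fromRel_adj] at hw1 hw2
    obtain ⟨hne1, h1⟩ := hw1
    obtain ⟨hne2, h2⟩ := hw2
    have hu0w : u0.1 ⊆ w.1 := by
      rcases h1 with h | h
      · exact h.1
      · exact absurd ((hmin i0).2 w.1 w.2.1 h.1) (fun e => hne1 (Subtype.ext e.symm))
    rcases h2 with h | h
    · obtain ⟨x, hx⟩ := hIne i0
      have : x ∈ u0.1 ∩ v0.1 := ⟨hx, h.1 (hu0w hx)⟩
      exact absurd (hdisj0 ▸ this) (Set.notMem_empty x)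
    · apply w.2.2
      apply Set.eq_univ_of_univ_subset
      rw [← hcup0]
      exact Set.union_subset hu0w h.1
  refine ⟨u0, v0, ?_⟩
  have hle := hdist3 u0 v0
  obtain ⟨p, hp⟩ := (hreach u0 v0).exists_walk_length_eq_dist
  by_contra hne3
  have hlen : p.length ≤ 2 := by omega
  rcases aux_walk_short p hlen with h | h | h
  · exact hu0v0 h
  · exact hnadj h
  · exact hnocommon h
end

section
/- Let S be a completely simple semigroup with n minimal left ideals, and let K be a nontrivial left ideal equal to the union of exactly k minimal left ideals. Then the degree of K in In(S) is (2^k − 2) + (2^{n−k} − 2). -/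
open Set

variable {S : Type*}

/-- Degree formula in `In(S)` for a completely simple semigroup with `n` minimal left
ideals: a nontrivial left ideal which is the union of exactly `k` of them has degree
`(2^k - 2) + (2^(n-k) - 2)`. -/
theorem stmt16 [Semigroup S] (hS : IsCompletelySimple S) (n k : ℕ)
    (I : Fin n → Set S) (hinj : Function.Injective I)
    (hmin : ∀ i, IsMinimalLeftIdeal (I i))
    (hall : ∀ J : Set S, IsMinimalLeftIdeal J → ∃ i, J = I i)
    (T : Finset (Fin n)) (hT : T.card = k)
    (K : IdealVert S) (hK : K.1 = ⋃ i ∈ T, I i) :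
    ((inclusionIdealGraph S).neighborSet K).ncard = (2 ^ k - 2) + (2 ^ (n - k) - 2) := by
  classical
  obtain ⟨hsimple, -⟩ := hS
  have hKlid : IsLeftIdeal K.1 := K.2.1
  have hKuniv : K.1 ≠ Set.univ := K.2.2
  have hKne : K.1.Nonempty := hKlid.1
  -- minimal left ideals are pairwise disjoint
  have hdisj : ∀ i j : Fin n, ∀ x : S, x ∈ I i → x ∈ I j → i = j := by
    intro i j x hxi hxj
    have h1 : IsLeftIdeal (I i ∩ I j) :=
      ⟨⟨x, hxi, hxj⟩, fun s y hy => ⟨(hmin i).1.1.2 s y hy.1, (hmin j).1.1.2 s y hy.2⟩⟩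
    have e1 := (hmin i).2 _ h1 inter_subset_left
    have e2 := (hmin j).2 _ h1 inter_subset_right
    exact hinj (e1 ▸ e2)
  -- absorption: if a left ideal contains some x*s with x ∈ I i, it contains all of (I i)*s
  have hPabs : ∀ (i : Fin n) (s : S) (J : Set S), IsLeftIdeal J →
      (∃ x ∈ I i, x * s ∈ J) → ∀ y ∈ I i, y * s ∈ J := by
    rintro i s J hJ ⟨x, hx, hxs⟩ y hy
    have hP : IsLeftIdeal {y | y ∈ I i ∧ y * s ∈ J} := by
      refine ⟨⟨x, hx, hxs⟩, fun t z hz => ⟨(hmin i).1.1.2 t z hz.1, ?_⟩⟩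
      have := hJ.2 t (z * s) hz.2
      rwa [← mul_assoc] at this
    have heq := (hmin i).2 _ hP (fun z hz => hz.1)
    exact ((Set.ext_iff.mp heq y).mpr hy).2
  -- right translates of minimal left ideals are minimal left ideals
  have hRmin : ∀ (i : Fin n) (s : S), IsMinimalLeftIdeal ((fun x => x * s) '' I i) := by
    intro i s
    have hlid : IsLeftIdeal ((fun x => x * s) '' I i) := by
      refine ⟨(hmin i).1.1.1.image _, ?_⟩
      rintro t _ ⟨x, hx, rfl⟩
      exact ⟨t * x, (hmin i).1.1.2 t x hx, mul_assoc t x s⟩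
    have hnuniv : (fun x => x * s) '' I i ≠ Set.univ := by
      intro h
      obtain ⟨a, ha⟩ := hKne
      have : a ∈ (fun x => x * s) '' I i := h ▸ mem_univ a
      obtain ⟨x, hx, hxa⟩ := this
      replace hxa : x * s = a := hxa
      have hsub : (fun x => x * s) '' I i ⊆ K.1 := by
        rintro _ ⟨y, hy, rfl⟩
        exact hPabs i s K.1 hKlid ⟨x, hx, hxa ▸ ha⟩ y hy
      exact hKuniv (eq_univ_of_univ_subset (h ▸ hsub))
    refine ⟨⟨hlid, hnuniv⟩, ?_⟩
    intro J hJ hJsub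
    obtain ⟨a, ha⟩ := hJ.1
    obtain ⟨x, hx, hxa⟩ := hJsub ha
    replace hxa : x * s = a := hxa
    refine subset_antisymm hJsub ?_
    rintro _ ⟨y, hy, rfl⟩
    exact hPabs i s J hJ ⟨x, hx, hxa ▸ ha⟩ y hy
  -- T is nonempty
  have hT0 : T.Nonempty := by
    rcases Finset.eq_empty_or_nonempty T with h | h
    · exfalso; obtain ⟨a, ha⟩ := hKne
      rw [hK, h] at ha; simp at ha
    · exact h
  -- the union of all minimal left ideals is everything
  have hcover : (⋃ i, I i) = Set.univ := by
    apply hsimple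
    obtain ⟨i0, _⟩ := hT0
    refine ⟨⟨(hmin i0).1.1.1.choose, mem_iUnion.mpr ⟨i0, (hmin i0).1.1.1.choose_spec⟩⟩, ?_, ?_⟩
    · intro s x hx
      obtain ⟨i, hi⟩ := mem_iUnion.mp hx
      exact mem_iUnion.mpr ⟨i, (hmin i).1.1.2 s x hi⟩
    · intro s x hx
      obtain ⟨i, hi⟩ := mem_iUnion.mp hx
      obtain ⟨j, hj⟩ := hall _ (hRmin i s)
      exact mem_iUnion.mpr ⟨j, hj ▸ ⟨x, hi, rfl⟩⟩
  have hmem : ∀ x : S, ∃ i, x ∈ I i := fun x =>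
    mem_iUnion.mp (hcover ▸ mem_univ x)
  -- a left ideal meeting I i contains I i
  have habs2 : ∀ (J : Set S), IsLeftIdeal J → ∀ i : Fin n, (I i ∩ J).Nonempty → I i ⊆ J := by
    intro J hJ i hne
    have h1 : IsLeftIdeal (I i ∩ J) :=
      ⟨hne, fun s y hy => ⟨(hmin i).1.1.2 s y hy.1, hJ.2 s y hy.2⟩⟩
    have heq := (hmin i).2 _ h1 inter_subset_left
    exact fun x hx => ((Set.ext_iff.mp heq x).mpr hx).2
  -- monotonicity of unions
  have hmono : ∀ A B : Finset (Fin n), ((⋃ i ∈ A, I i) ⊆ ⋃ i ∈ B, I i) ↔ A ⊆ B := by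
    intro A B
    constructor
    · intro h i hi
      obtain ⟨x, hx⟩ := (hmin i).1.1.1
      have : x ∈ ⋃ i ∈ B, I i := h (mem_iUnion₂.mpr ⟨i, hi, hx⟩)
      obtain ⟨j, hj, hxj⟩ := mem_iUnion₂.mp this
      exact (hdisj i j x hx hxj) ▸ hj
    · intro h
      exact iUnion₂_mono' fun i hi => ⟨i, h hi, subset_rfl⟩
  -- the index set of a vertex
  set u : IdealVert S → Finset (Fin n) :=
    fun J => Finset.univ.filter (fun i => I i ⊆ J.1) with hu
  have hueq : ∀ J : IdealVert S, J.1 = ⋃ i ∈ u J, I i := by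
    intro J
    ext a
    constructor
    · intro ha
      obtain ⟨i, hi⟩ := hmem a
      have hsub : I i ⊆ J.1 := habs2 J.1 J.2.1 i ⟨a, hi, ha⟩
      exact mem_iUnion₂.mpr ⟨i, by simp [hu, hsub], hi⟩
    · intro ha
      obtain ⟨i, hi, hai⟩ := mem_iUnion₂.mp ha
      exact (Finset.mem_filter.mp hi).2 hai
  have huA : ∀ (A : Finset (Fin n)) (J : IdealVert S), J.1 = (⋃ i ∈ A, I i) → u J = A := by
    intro A J hJA
    ext i
    simp only [hu, Finset.mem_filter, Finset.mem_univ, true_and]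
    constructor
    · intro h
      obtain ⟨x, hx⟩ := (hmin i).1.1.1
      have : x ∈ ⋃ j ∈ A, I j := hJA ▸ h hx
      obtain ⟨j, hj, hxj⟩ := mem_iUnion₂.mp this
      exact (hdisj i j x hx hxj) ▸ hj
    · intro h
      rw [hJA]
      exact subset_iUnion₂_of_subset i h subset_rfl
  have huinj : Function.Injective u := by
    intro J₁ J₂ h
    apply Subtype.ext
    rw [hueq J₁, hueq J₂, h]
  have hune : ∀ J : IdealVert S, (u J).Nonempty := by
    intro J
    obtain ⟨a, ha⟩ := J.2.1.1
    rw [hueq J] at ha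
    obtain ⟨i, hi, -⟩ := mem_iUnion₂.mp ha
    exact ⟨i, hi⟩
  have hnuniv : ∀ J : IdealVert S, u J ≠ Finset.univ := by
    intro J h
    apply J.2.2
    rw [hueq J, h]
    simpa using hcover
  have hTK : u K = T := huA T K hK
  have hTne : T.Nonempty := hTK ▸ hune K
  have hTnuniv : T ≠ Finset.univ := hTK ▸ hnuniv K
  -- unions of nonempty proper families are nontrivial left ideals
  have hvert : ∀ A : Finset (Fin n), A.Nonempty → A ≠ Finset.univ →
      IsNontrivialLeftIdeal (⋃ i ∈ A, I i) := by
    intro A ⟨i0, hi0⟩ hAuniv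
    refine ⟨⟨⟨(hmin i0).1.1.1.choose,
        mem_iUnion₂.mpr ⟨i0, hi0, (hmin i0).1.1.1.choose_spec⟩⟩, ?_⟩, ?_⟩
    · intro s x hx
      obtain ⟨i, hi, hxi⟩ := mem_iUnion₂.mp hx
      exact mem_iUnion₂.mpr ⟨i, hi, (hmin i).1.1.2 s x hxi⟩
    · intro h
      obtain ⟨j, hj⟩ : ∃ j, j ∉ A := by
        by_contra hc
        push_neg at hc
        exact hAuniv (Finset.eq_univ_iff_forall.mpr hc)
      obtain ⟨x, hx⟩ := (hmin j).1.1.1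
      have : x ∈ ⋃ i ∈ A, I i := h ▸ mem_univ x
      obtain ⟨i, hi, hxi⟩ := mem_iUnion₂.mp this
      exact hj ((hdisj j i x hx hxi) ▸ hi)
  have hssub : ∀ A B : Finset (Fin n), ((⋃ i ∈ A, I i) ⊂ ⋃ i ∈ B, I i) ↔ A ⊂ B := by
    intro A B
    rw [Set.ssubset_def, Finset.ssubset_def, hmono, hmono]
  -- neighbor characterization
  have hadj : ∀ J : IdealVert S,
      J ∈ (inclusionIdealGraph S).neighborSet K ↔ (u J ⊂ T ∨ T ⊂ u J) := by
    intro J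
    rw [SimpleGraph.mem_neighborSet]
    show (SimpleGraph.fromRel _).Adj K J ↔ _
    rw [SimpleGraph.fromRel_adj]
    constructor
    · rintro ⟨-, h | h⟩
      · right; rw [← hTK]; rw [hueq K, hueq J] at h; exact (hssub _ _).mp h
      · left; rw [← hTK]; rw [hueq K, hueq J] at h; exact (hssub _ _).mp h
    · rintro (h | h)
      · refine ⟨fun he => ?_, Or.inr ?_⟩
        · rw [← he, hTK] at h; exact lt_irrefl T h
        · rw [hueq K, hueq J, hTK]; exact (hssub _ _).mpr h
      · refine ⟨fun he => ?_, Or.inl ?_⟩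
        · rw [← he, hTK] at h; exact lt_irrefl T h
        · rw [hueq K, hueq J, hTK]; exact (hssub _ _).mpr h
  -- the image of the neighbor set under u
  set 𝒜 : Set (Finset (Fin n)) :=
    {A | (A.Nonempty ∧ A ⊂ T) ∨ (T ⊂ A ∧ A ≠ Finset.univ)} with h𝒜
  have himg : u '' ((inclusionIdealGraph S).neighborSet K) = 𝒜 := by
    ext A
    constructor
    · rintro ⟨J, hJ, rfl⟩
      rcases (hadj J).mp hJ with h | h
      · exact Or.inl ⟨hune J, h⟩
      · exact Or.inr ⟨h, hnuniv J⟩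
    · intro hA
      have hAne : A.Nonempty := by
        rcases hA with h | h
        · exact h.1
        · exact hTne.mono h.1.1
      have hAnuniv : A ≠ Finset.univ := by
        rcases hA with h | h
        · intro he; exact hTnuniv (Finset.univ_subset_iff.mp (he ▸ h.2.subset))
        · exact h.2
      set J : IdealVert S := ⟨⋃ i ∈ A, I i, hvert A hAne hAnuniv⟩ with hJ
      have huJ : u J = A := huA A J rfl
      refine ⟨J, (hadj J).mpr ?_, huJ⟩
      rw [huJ]
      rcases hA with h | h
      · exact Or.inl h.2
      · exact Or.inr h.1
  have hncard : ((inclusionIdealGraph S).neighborSet K).ncard = 𝒜.ncard := by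
    rw [← himg, Set.ncard_image_of_injective _ huinj]
  rw [hncard]
  -- now count 𝒜
  set F1 : Finset (Finset (Fin n)) := (T.powerset.erase T).erase ∅ with hF1
  set F2 : Finset (Finset (Fin n)) :=
    ((Tᶜ.powerset.erase Tᶜ).erase ∅).image (fun B => B ∪ T) with hF2
  have hmemF1 : ∀ A, A ∈ F1 ↔ (A.Nonempty ∧ A ⊂ T) := by
    intro A
    simp only [hF1, Finset.mem_erase, Finset.mem_powerset]
    constructor
    · rintro ⟨h0, hne, hsub⟩
      exact ⟨Finset.nonempty_iff_ne_empty.mpr h0, lt_of_le_of_ne hsub hne⟩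
    · rintro ⟨h0, hss⟩
      exact ⟨Finset.nonempty_iff_ne_empty.mp h0, ne_of_lt hss, le_of_lt hss⟩
  have hmemF2 : ∀ A, A ∈ F2 ↔ (T ⊂ A ∧ A ≠ Finset.univ) := by
    intro A
    simp only [hF2, Finset.mem_image, Finset.mem_erase, Finset.mem_powerset]
    constructor
    · rintro ⟨B, ⟨h0, hne, hsub⟩, rfl⟩
      obtain ⟨b, hb⟩ := Finset.nonempty_iff_ne_empty.mpr h0
      constructor
      · refine lt_of_le_of_ne Finset.subset_union_right fun he => ?_
        have : b ∈ T := he ▸ Finset.mem_union_left T hb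
        exact (Finset.mem_compl.mp (hsub hb)) this
      · intro he
        apply hne
        apply Finset.Subset.antisymm hsub
        intro x hx
        have : x ∈ B ∪ T := he ▸ Finset.mem_univ x
        rcases Finset.mem_union.mp this with h | h
        · exact h
        · exact absurd h (Finset.mem_compl.mp hx)
    · rintro ⟨hss, hnuniv'⟩
      refine ⟨A \ T, ⟨?_, ?_, ?_⟩, ?_⟩
      · intro he
        obtain ⟨a, ha, hat⟩ := Finset.exists_of_ssubset hss
        have : a ∈ A \ T := Finset.mem_sdiff.mpr ⟨ha, hat⟩
        rw [he] at this
        simp at this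
      · intro he
        apply hnuniv'
        apply Finset.eq_univ_of_forall
        intro x
        by_cases hx : x ∈ T
        · exact hss.1 hx
        · have : x ∈ A \ T := he ▸ Finset.mem_compl.mpr hx
          exact (Finset.mem_sdiff.mp this).1
      · intro x hx
        exact Finset.mem_compl.mpr (Finset.mem_sdiff.mp hx).2
      · exact Finset.sdiff_union_of_subset hss.1
  have h𝒜eq : 𝒜 = ↑(F1 ∪ F2) := by
    ext A
    simp only [h𝒜, Set.mem_setOf_eq, Finset.coe_union, Set.mem_union, Finset.mem_coe,
      hmemF1, hmemF2]
  rw [h𝒜eq, Set.ncard_coe_finset]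
  have hdisjF : Disjoint F1 F2 := by
    rw [Finset.disjoint_left]
    intro A h1 h2
    have q1 := (hmemF1 A).mp h1
    have q2 := (hmemF2 A).mp h2
    exact ssubset_irrefl A (q1.2.trans q2.1)
  rw [Finset.card_union_of_disjoint hdisjF]
  have hc1 : F1.card = 2 ^ k - 2 := by
    rw [hF1]
    rw [Finset.card_erase_of_mem, Finset.card_erase_of_mem, Finset.card_powerset, hT]
    · omega
    · exact Finset.mem_powerset_self T
    · exact Finset.mem_erase.mpr ⟨(Finset.nonempty_iff_ne_empty.mp hTne).symm,
        Finset.empty_mem_powerset T⟩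
  have hc2 : F2.card = 2 ^ (n - k) - 2 := by
    rw [hF2]
    rw [Finset.card_image_of_injOn]
    · rw [Finset.card_erase_of_mem, Finset.card_erase_of_mem, Finset.card_powerset,
        Finset.card_compl, Fintype.card_fin, hT]
      · omega
      · exact Finset.mem_powerset_self _
      · exact Finset.mem_erase.mpr ⟨Ne.symm fun hc => hTnuniv
          ((Finset.compl_eq_empty_iff T).mp hc), Finset.empty_mem_powerset _⟩
    · intro B1 hB1 B2 hB2 he
      have s1 : B1 ⊆ Tᶜ := Finset.mem_powerset.mp (Finset.mem_of_mem_erase (Finset.mem_of_mem_erase hB1))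
      have s2 : B2 ⊆ Tᶜ := Finset.mem_powerset.mp (Finset.mem_of_mem_erase (Finset.mem_of_mem_erase hB2))
      replace he : B1 ∪ T = B2 ∪ T := he
      have : (B1 ∪ T) \ T = (B2 ∪ T) \ T := by rw [he]
      rwa [Finset.union_sdiff_right, Finset.union_sdiff_right,
        Finset.sdiff_eq_self_of_disjoint, Finset.sdiff_eq_self_of_disjoint] at this
      · exact Finset.disjoint_left.mpr fun x hx => Finset.mem_compl.mp (s2 hx)
      · exact Finset.disjoint_left.mpr fun x hx => Finset.mem_compl.mp (s1 hx)
  rw [hc1, hc2]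
end

section
/- Let S be a completely simple semigroup with n ≥ 3 minimal left ideals. Then every vertex of In(S) has even degree (so In(S) is Eulerian since it is connected). -/
open Set

variable {S : Type*}

/-!
In a simple semigroup the minimal left ideals `I i` are pairwise disjoint and cover `S` (their
union is a two-sided ideal, since right translates of minimal left ideals are minimal). Hence
every nontrivial left ideal is the union of the minimal ones it contains, and `J ↦ {i | I i ⊆ J}`
identifies the vertices of `In(S)` with the nonempty proper subsets of the index set, inclusion
with inclusion. A vertex indexed by a `k`-set thus has `(2 ^ k - 2) + (2 ^ (n - k) - 2)`
neighbours, an even number.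
-/

open Finset

section ProperSubsets

variable {α : Type*} [Fintype α] [DecidableEq α]

-- For `A = ∅` the truncated subtraction `1 - 2 = 0` gives the right count.
theorem card_filter_ssubset_nonempty (A : Finset α) :
    #{B | B ⊂ A ∧ B.Nonempty} = 2 ^ #A - 2 := by
  have hfilter : ({B | B ⊂ A ∧ B.Nonempty} : Finset (Finset α)) = A.powerset \ {A, ∅} := by
    ext B
    simp only [Finset.mem_filter, Finset.mem_univ, true_and, Finset.mem_sdiff,
      Finset.mem_powerset, Finset.mem_insert, Finset.mem_singleton,
      Finset.ssubset_iff_subset_ne, Finset.nonempty_iff_ne_empty]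
    tauto
  rw [hfilter, card_sdiff_of_subset (by simp [Finset.insert_subset_iff]), card_powerset]
  rcases A.eq_empty_or_nonempty with rfl | hA
  · simp
  · rw [card_pair hA.ne_empty]

theorem card_filter_ssuperset_ne_univ (A : Finset α) :
    #{B | A ⊂ B ∧ B ≠ Finset.univ} = 2 ^ #Aᶜ - 2 := by
  rw [← card_filter_ssubset_nonempty]
  refine card_nbij' compl compl ?_ ?_ (fun B _ => compl_compl B) (fun B _ => compl_compl B)
  · intro B
    simp [Finset.nonempty_iff_ne_empty]
  · intro B
    simp only [Finset.coe_filter, Finset.mem_univ, true_and, Set.mem_ofPred_eq]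
    exact fun ⟨hB, hne⟩ => ⟨by simpa using Finset.compl_ssubset_compl.2 hB,
      (Finset.compl_ne_univ_iff_nonempty B).2 hne⟩

theorem even_two_pow_sub_two (k : ℕ) : Even (2 ^ k - 2) := by
  cases k with
  | zero => simp
  | succ k => exact ⟨2 ^ k - 1, by rw [pow_succ]; omega⟩

theorem even_card_filter_comparable_proper (A : Finset α) :
    Even #{B | (B ⊂ A ∧ B.Nonempty) ∨ (A ⊂ B ∧ B ≠ Finset.univ)} := by
  rw [filter_or, card_union_of_disjoint, card_filter_ssubset_nonempty,
    card_filter_ssuperset_ne_univ]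
  · exact (even_two_pow_sub_two _).add (even_two_pow_sub_two _)
  · exact disjoint_filter.2 fun B _ hsub hsup => hsub.1.asymm hsup.1

end ProperSubsets

section LeftIdeals

variable [Semigroup S]

theorem IsMinimalLeftIdeal.subset_of_inter_nonempty {K J : Set S} (hK : IsMinimalLeftIdeal K)
    (hJ : IsLeftIdeal J) (h : (K ∩ J).Nonempty) : K ⊆ J := by
  have hKJ : IsLeftIdeal (K ∩ J) := ⟨h, fun s x hx => ⟨hK.1.1.2 s x hx.1, hJ.2 s x hx.2⟩⟩
  rw [← hK.2 _ hKJ Set.inter_subset_left]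
  exact Set.inter_subset_right

theorem IsMinimalLeftIdeal.eq_of_inter_nonempty {K L : Set S} (hK : IsMinimalLeftIdeal K)
    (hL : IsMinimalLeftIdeal L) (h : (K ∩ L).Nonempty) : K = L :=
  hL.2 K hK.1.1 (hK.subset_of_inter_nonempty hL.1.1 h)

theorem IsLeftIdeal.image_mul_right {L : Set S} (hL : IsLeftIdeal L) (s : S) :
    IsLeftIdeal ((· * s) '' L) := by
  refine ⟨hL.1.image _, ?_⟩
  rintro t _ ⟨x, hx, rfl⟩
  exact ⟨t * x, hL.2 t x hx, mul_assoc t x s⟩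

theorem IsLeftIdeal.preimage_mul_right {J : Set S} (hJ : IsLeftIdeal J) {s : S}
    (hne : ((· * s) ⁻¹' J).Nonempty) : IsLeftIdeal ((· * s) ⁻¹' J) :=
  ⟨hne, fun t x hx => by simpa only [Set.mem_preimage, mul_assoc] using hJ.2 t _ hx⟩

theorem IsMinimalLeftIdeal.image_mul_right_subset {L J : Set S} (hL : IsMinimalLeftIdeal L)
    (hJ : IsLeftIdeal J) {s : S} (h : ((· * s) '' L ∩ J).Nonempty) : (· * s) '' L ⊆ J := by
  obtain ⟨_, ⟨x, hx, rfl⟩, hxJ⟩ := h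
  exact Set.image_subset_iff.2 <|
    hL.subset_of_inter_nonempty (hJ.preimage_mul_right ⟨x, hxJ⟩) ⟨x, hx, hxJ⟩

theorem IsMinimalLeftIdeal.image_mul_right {L N : Set S} (hL : IsMinimalLeftIdeal L)
    (hN : IsNontrivialLeftIdeal N) (s : S) : IsMinimalLeftIdeal ((· * s) '' L) := by
  have hLs := hL.1.1.image_mul_right s
  refine ⟨⟨hLs, fun huniv => hN.2 ?_⟩, fun J hJ hJL => ?_⟩
  · refine Set.eq_univ_of_univ_subset (huniv ▸ hL.image_mul_right_subset hN.1 ?_)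
    simpa [huniv] using hN.1.1
  · obtain ⟨j, hj⟩ := hJ.1
    exact hJL.antisymm (hL.image_mul_right_subset hJ ⟨j, hJL hj, hj⟩)

theorem iUnion_eq_univ_of_forall_isIdeal {ι : Type*} [Nonempty ι]
    (hS : ∀ J : Set S, IsIdeal J → J = univ) {I : ι → Set S}
    (hmin : ∀ i, IsMinimalLeftIdeal (I i))
    (hall : ∀ J : Set S, IsMinimalLeftIdeal J → ∃ i, J = I i) : ⋃ i, I i = univ := by
  inhabit ι
  refine hS _ ⟨?_, ?_, ?_⟩
  · exact (hmin default).1.1.1.mono (Set.subset_iUnion I default)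
  · simp only [Set.mem_iUnion]
    exact fun s x ⟨i, hx⟩ => ⟨i, (hmin i).1.1.2 s x hx⟩
  · simp only [Set.mem_iUnion]
    rintro s x ⟨i, hx⟩
    obtain ⟨j, hj⟩ := hall _ ((hmin i).image_mul_right (hmin default).1 s)
    exact ⟨j, hj ▸ Set.mem_image_of_mem _ hx⟩

theorem inclusionIdealGraph_adj {v w : IdealVert S} :
    (inclusionIdealGraph S).Adj v w ↔ v.1 ⊂ w.1 ∨ w.1 ⊂ v.1 := by
  rw [inclusionIdealGraph, SimpleGraph.fromRel_adj, and_iff_right_of_imp]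
  rintro (h | h) rfl <;> exact h.ne rfl

end LeftIdeals

open Classical in
noncomputable def indicesIn {ι : Type*} [Fintype ι] (I : ι → Set S) (J : Set S) : Finset ι :=
  {i | I i ⊆ J}

section Indices

variable {ι : Type*} [Fintype ι] {I : ι → Set S}

theorem mem_indicesIn {J : Set S} {i : ι} : i ∈ indicesIn I J ↔ I i ⊆ J := by
  simp [indicesIn]

theorem indicesIn_univ : indicesIn I univ = Finset.univ := by
  ext
  simp [mem_indicesIn]

variable [Semigroup S]

theorem biUnion_indicesIn (hmin : ∀ i, IsMinimalLeftIdeal (I i)) (hcover : ⋃ i, I i = univ)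
    {J : Set S} (hJ : IsLeftIdeal J) : ⋃ i ∈ indicesIn I J, I i = J := by
  refine (Set.iUnion₂_subset fun i hi => mem_indicesIn.1 hi).antisymm fun a ha => ?_
  obtain ⟨i, hai⟩ := Set.mem_iUnion.1 (hcover ▸ Set.mem_univ a)
  exact Set.mem_biUnion (mem_indicesIn.2 ((hmin i).subset_of_inter_nonempty hJ ⟨a, hai, ha⟩)) hai

theorem indicesIn_biUnion (hmin : ∀ i, IsMinimalLeftIdeal (I i)) (hinj : Function.Injective I)
    (B : Finset ι) : indicesIn I (⋃ i ∈ B, I i) = B := by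
  ext i
  refine ⟨fun hi => ?_, fun hi => mem_indicesIn.2 (Set.subset_biUnion_of_mem hi)⟩
  obtain ⟨a, ha⟩ := (hmin i).1.1.1
  obtain ⟨j, hj, haj⟩ := Set.mem_iUnion₂.1 (mem_indicesIn.1 hi ha)
  rwa [hinj ((hmin i).eq_of_inter_nonempty (hmin j) ⟨a, ha, haj⟩)]

theorem indicesIn_subset_indicesIn_iff (hmin : ∀ i, IsMinimalLeftIdeal (I i))
    (hcover : ⋃ i, I i = univ) {J J' : Set S} (hJ : IsLeftIdeal J) :
    indicesIn I J ⊆ indicesIn I J' ↔ J ⊆ J' := by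
  refine ⟨fun h => ?_, fun h i hi => mem_indicesIn.2 ((mem_indicesIn.1 hi).trans h)⟩
  rw [← biUnion_indicesIn hmin hcover hJ]
  exact Set.iUnion₂_subset fun i hi => mem_indicesIn.1 (h hi)

theorem indicesIn_ssubset_indicesIn_iff (hmin : ∀ i, IsMinimalLeftIdeal (I i))
    (hcover : ⋃ i, I i = univ) {J J' : Set S} (hJ : IsLeftIdeal J) (hJ' : IsLeftIdeal J') :
    indicesIn I J ⊂ indicesIn I J' ↔ J ⊂ J' := by
  rw [Finset.ssubset_def, Set.ssubset_def, indicesIn_subset_indicesIn_iff hmin hcover hJ,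
    indicesIn_subset_indicesIn_iff hmin hcover hJ']

theorem indicesIn_nonempty (hmin : ∀ i, IsMinimalLeftIdeal (I i)) (hcover : ⋃ i, I i = univ)
    {J : Set S} (hJ : IsLeftIdeal J) : (indicesIn I J).Nonempty := by
  obtain ⟨a, ha⟩ := hJ.1
  rw [← biUnion_indicesIn hmin hcover hJ] at ha
  obtain ⟨i, hi, -⟩ := Set.mem_iUnion₂.1 ha
  exact ⟨i, hi⟩

theorem indicesIn_ne_univ (hmin : ∀ i, IsMinimalLeftIdeal (I i)) (hcover : ⋃ i, I i = univ)
    {J : Set S} (hJ : IsNontrivialLeftIdeal J) : indicesIn I J ≠ Finset.univ := by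
  intro h
  apply hJ.2
  rw [← biUnion_indicesIn hmin hcover hJ.1, h]
  simpa using hcover

theorem isNontrivialLeftIdeal_biUnion (hmin : ∀ i, IsMinimalLeftIdeal (I i))
    (hinj : Function.Injective I) {B : Finset ι} (hB : B.Nonempty) (hBu : B ≠ Finset.univ) :
    IsNontrivialLeftIdeal (⋃ i ∈ B, I i) := by
  refine ⟨⟨?_, ?_⟩, fun h => hBu ?_⟩
  · obtain ⟨i, hi⟩ := hB
    exact (hmin i).1.1.1.mono (Set.subset_biUnion_of_mem hi)
  · simp only [Set.mem_iUnion₂]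
    exact fun s x ⟨i, hi, hx⟩ => ⟨i, hi, (hmin i).1.1.2 s x hx⟩
  · rw [← indicesIn_biUnion hmin hinj B, h, indicesIn_univ]

theorem injective_indicesIn (hmin : ∀ i, IsMinimalLeftIdeal (I i)) (hcover : ⋃ i, I i = univ) :
    Function.Injective fun w : IdealVert S => indicesIn I w.1 := fun v w h =>
  Subtype.ext <| by
    rw [← biUnion_indicesIn hmin hcover v.2.1, ← biUnion_indicesIn hmin hcover w.2.1]
    exact congrArg (fun B => ⋃ i ∈ B, I i) h

theorem image_indicesIn_neighborSet (hmin : ∀ i, IsMinimalLeftIdeal (I i))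
    (hinj : Function.Injective I) (hcover : ⋃ i, I i = univ) (v : IdealVert S) :
    (fun w : IdealVert S => indicesIn I w.1) '' (inclusionIdealGraph S).neighborSet v =
      {B | (B ⊂ indicesIn I v.1 ∧ B.Nonempty) ∨ (indicesIn I v.1 ⊂ B ∧ B ≠ Finset.univ)} := by
  have hssub {J J' : Set S} (hJ : IsLeftIdeal J) (hJ' : IsLeftIdeal J') :=
    indicesIn_ssubset_indicesIn_iff hmin hcover hJ hJ'
  ext B
  simp only [Set.mem_image, SimpleGraph.mem_neighborSet, inclusionIdealGraph_adj,
    Set.mem_ofPred_eq]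
  constructor
  · rintro ⟨w, hvw, rfl⟩
    rw [← hssub v.2.1 w.2.1, ← hssub w.2.1 v.2.1] at hvw
    rcases hvw with h | h
    · exact Or.inr ⟨h, indicesIn_ne_univ hmin hcover w.2⟩
    · exact Or.inl ⟨h, indicesIn_nonempty hmin hcover w.2.1⟩
  · intro hB
    have hBproper : B.Nonempty ∧ B ≠ Finset.univ := by
      rcases hB with ⟨hBv, hB⟩ | ⟨hvB, hB⟩
      · exact ⟨hB, (hBv.trans_subset (Finset.subset_univ _)).ne⟩
      · exact ⟨(indicesIn_nonempty hmin hcover v.2.1).mono hvB.subset, hB⟩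
    have hw := isNontrivialLeftIdeal_biUnion hmin hinj hBproper.1 hBproper.2
    refine ⟨⟨_, hw⟩, ?_, indicesIn_biUnion hmin hinj B⟩
    rw [← hssub v.2.1 hw.1, ← hssub hw.1 v.2.1, indicesIn_biUnion hmin hinj B]
    exact hB.symm.imp And.left And.left

end Indices

/-- For a completely simple semigroup with `n ≥ 3` minimal left ideals, every vertex of
`In(S)` has even degree (so, being connected, `In(S)` is Eulerian). -/
theorem stmt17 [Semigroup S] (hS : IsCompletelySimple S) (n : ℕ) (hn : 3 ≤ n)
    (I : Fin n → Set S) (hinj : Function.Injective I)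
    (hmin : ∀ i, IsMinimalLeftIdeal (I i))
    (hall : ∀ J : Set S, IsMinimalLeftIdeal J → ∃ i, J = I i) :
    ∀ v : IdealVert S, Even (((inclusionIdealGraph S).neighborSet v).ncard) := by
  have : Nonempty (Fin n) := ⟨⟨0, by omega⟩⟩
  have hcover := iUnion_eq_univ_of_forall_isIdeal hS.1 hmin hall
  intro v
  rw [← (injective_indicesIn hmin hcover).injOn.ncard_image,
    image_indicesIn_neighborSet hmin hinj hcover v, ← Finset.coe_filter_univ,
    Set.ncard_coe_finset]
  exact even_card_filter_comparable_proper _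
end
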